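/- arXiv:2509.06808 — 5 statements merged into one kernel-verified Lean document; each statement's English description precedes it below -/
import Mathlib

section
/- Let G be a finite simple graph with Ore-degree θ(G) ≤ 7, and let v be a vertex of G of degree 5. If the graph G − v obtained by deleting v admits a strong edge-coloring with 13 colors, then G admits a strong edge-coloring with 13 colors. -/
/-- Two edges `e` and `f` of a graph `G` *see* each other if they are contained in a
common path or cycle of length at most three, i.e. they share an endpoint or some
endpoint of `e` is adjacent to some endpoint of `f`. -/
def SimpleGraph.Sees {V : Type*} (G : SimpleGraph V) (e f : Sym2 V) : Prop :=
  ∃ u ∈ e, ∃ v ∈ f, u = v ∨ G.Adj u v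

/-- `c` is a strong edge-coloring of `G`: edges that see each other get distinct colors. -/
def SimpleGraph.IsStrongEdgeColoring {V α : Type*} (G : SimpleGraph V) (c : Sym2 V → α) : Prop :=
  ∀ e ∈ G.edgeSet, ∀ f ∈ G.edgeSet, e ≠ f → G.Sees e f → c e ≠ c f

/-- `G` admits a strong edge-coloring with `n` colors. -/
def SimpleGraph.HasStrongColoring {V : Type*} (G : SimpleGraph V) (n : ℕ) : Prop :=
  ∃ c : Sym2 V → Fin n, G.IsStrongEdgeColoring c

set_option linter.unusedSectionVars false
set_option maxHeartbeats 1000000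

namespace SECaux

open Finset

variable {V : Type*} [Fintype V] [DecidableEq V] (G : SimpleGraph V) [DecidableRel G.Adj]

instance (e f : Sym2 V) : Decidable (G.Sees e f) :=
  inferInstanceAs (Decidable (∃ u ∈ e, ∃ v ∈ f, u = v ∨ G.Adj u v))

lemma sees_symm {e f : Sym2 V} (h : G.Sees e f) : G.Sees f e := by
  obtain ⟨a, ha, b, hb, hab⟩ := h
  refine ⟨b, hb, a, ha, ?_⟩
  rcases hab with rfl | hab
  · exact Or.inl rfl
  · exact Or.inr hab.symm

variable (v : V)

def nvE (x : V) : Finset (Sym2 V) :=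
  G.edgeFinset.filter (fun f => x ∈ f ∧ v ∉ f)

lemma mem_nvE {x : V} {f : Sym2 V} :
    f ∈ nvE G v x ↔ f ∈ G.edgeSet ∧ x ∈ f ∧ v ∉ f := by
  simp [nvE]

def EE (u : V) : Finset (Sym2 V) :=
  G.edgeFinset.filter (fun f => v ∉ f ∧ G.Sees s(v, u) f)

lemma mem_EE {u : V} {f : Sym2 V} :
    f ∈ EE G v u ↔ f ∈ G.edgeSet ∧ v ∉ f ∧ G.Sees s(v, u) f := by
  simp [EE]

lemma nvE_subset_incidence (x : V) : nvE G v x ⊆ G.incidenceFinset x := by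
  intro f hf
  rw [mem_nvE] at hf
  rw [SimpleGraph.mem_incidenceFinset]
  exact ⟨hf.1, hf.2.1⟩

lemma card_nvE_le_degree (x : V) : (nvE G v x).card ≤ G.degree x := by
  calc (nvE G v x).card ≤ (G.incidenceFinset x).card :=
        card_le_card (nvE_subset_incidence G v x)
    _ = G.degree x := G.card_incidenceFinset_eq_degree x

lemma card_nvE_le_of_adj {x : V} (hx : G.Adj v x) :
    (nvE G v x).card + 1 ≤ G.degree x := by
  have hsub : nvE G v x ⊆ (G.incidenceFinset x).erase s(v, x) := by
    intro f hf
    rw [mem_nvE] at hf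
    rw [Finset.mem_erase]
    refine ⟨fun hcon => ?_, by rw [SimpleGraph.mem_incidenceFinset]; exact ⟨hf.1, hf.2.1⟩⟩
    exact hf.2.2 (hcon ▸ Sym2.mem_mk_left v x)
  have hmem : s(v, x) ∈ G.incidenceFinset x := by
    rw [SimpleGraph.mem_incidenceFinset]
    exact ⟨hx, Sym2.mem_mk_right v x⟩
  calc (nvE G v x).card + 1 ≤ ((G.incidenceFinset x).erase s(v, x)).card + 1 :=
        by exact Nat.add_le_add_right (card_le_card hsub) 1
    _ = (G.incidenceFinset x).card := by
        rw [Finset.card_erase_of_mem hmem]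
        have : 0 < (G.incidenceFinset x).card := Finset.card_pos.2 ⟨_, hmem⟩
        omega
    _ = G.degree x := G.card_incidenceFinset_eq_degree x

lemma EE_eq {u : V} (hu : G.Adj v u) :
    EE G v u = (G.neighborFinset v).biUnion (nvE G v) ∪
      ((G.neighborFinset u).erase v).biUnion (fun w => (nvE G v w).erase s(u, w)) := by
  ext f
  constructor
  · intro hf
    rw [mem_EE] at hf
    obtain ⟨hfe, hvf, a, ha, b, hb, hab⟩ := hf
    rw [Sym2.mem_iff] at ha
    rw [Finset.mem_union]
    have hbv : b ≠ v := fun hcon => hvf (hcon ▸ hb)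
    rcases ha with ha | ha
    · rcases hab with heq | hab
      · exact absurd ((ha.symm.trans heq) ▸ hb) hvf
      · rw [ha] at hab
        exact Or.inl (Finset.mem_biUnion.2 ⟨b, (G.mem_neighborFinset v b).2 hab,
          (mem_nvE G v).2 ⟨hfe, hb, hvf⟩⟩)
    · rcases hab with heq | hab
      · refine Or.inl (Finset.mem_biUnion.2 ⟨u, (G.mem_neighborFinset v u).2 hu,
          (mem_nvE G v).2 ⟨hfe, ?_, hvf⟩⟩)
        rw [ha] at heq; exact heq ▸ hb
      · rw [ha] at hab
        by_cases hfab : f = s(u, b)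
        · refine Or.inl (Finset.mem_biUnion.2 ⟨u, (G.mem_neighborFinset v u).2 hu,
            (mem_nvE G v).2 ⟨hfe, ?_, hvf⟩⟩)
          rw [hfab]; exact Sym2.mem_mk_left u b
        · refine Or.inr (Finset.mem_biUnion.2 ⟨b, ?_, ?_⟩)
          · exact Finset.mem_erase.2 ⟨hbv, (G.mem_neighborFinset u b).2 hab⟩
          · exact Finset.mem_erase.2 ⟨fun hcon => hfab (hcon ▸ rfl),
              (mem_nvE G v).2 ⟨hfe, hb, hvf⟩⟩
  · intro hf
    rw [Finset.mem_union] at hf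
    rcases hf with hf | hf
    · obtain ⟨x, hx, hfx⟩ := Finset.mem_biUnion.1 hf
      rw [mem_nvE] at hfx
      rw [G.mem_neighborFinset] at hx
      exact (mem_EE G v).2 ⟨hfx.1, hfx.2.2,
        ⟨v, Sym2.mem_mk_left v u, x, hfx.2.1, Or.inr hx⟩⟩
    · obtain ⟨x, hx, hfx⟩ := Finset.mem_biUnion.1 hf
      rw [Finset.mem_erase] at hx
      rw [Finset.mem_erase, mem_nvE] at hfx
      rw [G.mem_neighborFinset] at hx
      exact (mem_EE G v).2 ⟨hfx.2.1, hfx.2.2.2,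
        ⟨u, Sym2.mem_mk_right v u, x, hfx.2.2.1, Or.inr hx.2⟩⟩

/-- normal form for an edge through `v` -/
lemma edge_through_v {e : Sym2 V} (hve : v ∈ e) (he : e ∈ G.edgeSet) :
    ∃ u, G.Adj v u ∧ e = s(v, u) := by
  induction e with
  | _ x y =>
    rw [Sym2.mem_iff] at hve
    rw [SimpleGraph.mem_edgeSet] at he
    rcases hve with rfl | rfl
    · exact ⟨y, he, rfl⟩
    · exact ⟨x, he.symm, Sym2.eq_swap⟩

/-- the glued coloring -/
def glue (a : V → Fin 13) (c₂ : Sym2 V → Fin 13) : Sym2 V → Fin 13 :=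
  Sym2.lift ⟨fun x y => if x = v then a y else if y = v then a x else c₂ s(x, y), by
    intro x y
    dsimp only
    by_cases hx : x = v <;> by_cases hy : y = v <;>
      simp [hx, hy, Sym2.eq_swap]⟩

lemma glue_new {a : V → Fin 13} {c₂ : Sym2 V → Fin 13} {u : V} (hu : G.Adj v u) :
    glue v a c₂ s(v, u) = a u := by
  have : u ≠ v := fun hc => (G.irrefl (hc ▸ hu))
  simp [glue, this]

lemma glue_old {a : V → Fin 13} {c₂ : Sym2 V → Fin 13} {f : Sym2 V} (hf : v ∉ f) :
    glue v a c₂ f = c₂ f := by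
  induction f with
  | _ x y =>
    rw [Sym2.mem_iff] at hf
    push_neg at hf
    simp [glue, Ne.symm hf.1, Ne.symm hf.2]

/-- The extension lemma: a coloring of the old edges that is strong away from `v`,
together with an injective choice of colors for the new edges avoiding everything
they see, glue to a strong coloring. -/
lemma ext_lemma (c₂ : Sym2 V → Fin 13)
    (hold : ∀ e ∈ G.edgeSet, ∀ f ∈ G.edgeSet, v ∉ e → v ∉ f → e ≠ f → G.Sees e f →
      c₂ e ≠ c₂ f)
    (a : V → Fin 13)
    (hainj : ∀ u u' : V, G.Adj v u → G.Adj v u' → a u = a u' → u = u')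
    (havoid : ∀ u : V, G.Adj v u → ∀ f ∈ G.edgeSet, v ∉ f → G.Sees s(v, u) f →
      a u ≠ c₂ f) :
    G.HasStrongColoring 13 := by
  refine ⟨glue v a c₂, ?_⟩
  intro e he f hf hne hsees
  by_cases hve : v ∈ e <;> by_cases hvf : v ∈ f
  · obtain ⟨u, hu, rfl⟩ := edge_through_v G v hve he
    obtain ⟨u', hu', rfl⟩ := edge_through_v G v hvf hf
    rw [glue_new G v hu, glue_new G v hu']
    intro hc
    exact hne (by rw [hainj u u' hu hu' hc])
  · obtain ⟨u, hu, rfl⟩ := edge_through_v G v hve he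
    rw [glue_new G v hu, glue_old v hvf]
    exact havoid u hu f hf hvf hsees
  · obtain ⟨u, hu, rfl⟩ := edge_through_v G v hvf hf
    rw [glue_new G v hu, glue_old v hve]
    exact (havoid u hu e he hve (sees_symm G hsees)).symm
  · rw [glue_old v hve, glue_old v hvf]
    exact hold e he f hf hve hvf hne hsees

/-- transporting the coloring of `G - v` to a coloring of old edges -/
lemma transport (u₀ : V) (hu₀ : u₀ ≠ v)
    (h : (((⊤ : G.Subgraph).deleteVerts {v}).coe).HasStrongColoring 13) :
    ∃ c : Sym2 V → Fin 13,
      ∀ e ∈ G.edgeSet, ∀ f ∈ G.edgeSet, v ∉ e → v ∉ f → e ≠ f → G.Sees e f →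
        c e ≠ c f := by
  obtain ⟨c₀, hc₀⟩ := h
  set Gv := (((⊤ : G.Subgraph).deleteVerts {v}).coe) with hGv
  have hvert : ∀ x : V, x ≠ v → x ∈ ((⊤ : G.Subgraph).deleteVerts {v}).verts := by
    intro x hx
    simp [SimpleGraph.Subgraph.deleteVerts_verts, hx]
  let ts : V → ((⊤ : G.Subgraph).deleteVerts {v}).verts := fun x =>
    if hx : x = v then ⟨u₀, hvert u₀ hu₀⟩ else ⟨x, hvert x hx⟩
  have hts : ∀ x : V, x ≠ v → (ts x : V) = x := by
    intro x hx; simp [ts, hx]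
  have hadj : ∀ x y : V, x ≠ v → y ≠ v → G.Adj x y → Gv.Adj (ts x) (ts y) := by
    intro x y hx hy hxy
    rw [hGv, SimpleGraph.Subgraph.coe_adj]
    simp only [SimpleGraph.Subgraph.deleteVerts_adj, SimpleGraph.Subgraph.verts_top,
      Set.mem_univ, true_and, SimpleGraph.Subgraph.top_adj, Set.mem_singleton_iff]
    rw [hts x hx, hts y hy]
    exact ⟨hx, hy, hxy⟩
  refine ⟨fun e => c₀ (e.map ts), ?_⟩
  intro e he f hf hve hvf hne hsees
  have key : ∀ (z : Sym2 V), v ∉ z → (z.map ts).map (Subtype.val) = z := by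
    intro z hz
    induction z with
    | _ x y =>
      rw [Sym2.mem_iff] at hz
      push_neg at hz
      rw [Sym2.map_pair_eq, Sym2.map_pair_eq, hts x (Ne.symm hz.1), hts y (Ne.symm hz.2)]
  have hmemmap : ∀ (z : Sym2 V), z ∈ G.edgeSet → v ∉ z → z.map ts ∈ Gv.edgeSet := by
    intro z hz hvz
    induction z with
    | _ x y =>
      rw [Sym2.mem_iff] at hvz
      push_neg at hvz
      rw [Sym2.map_pair_eq, SimpleGraph.mem_edgeSet]
      exact hadj x y (Ne.symm hvz.1) (Ne.symm hvz.2) ((SimpleGraph.mem_edgeSet G).1 hz)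
  refine hc₀ (e.map ts) (hmemmap e he hve) (f.map ts) (hmemmap f hf hvf) ?_ ?_
  · intro hc
    apply hne
    have := congrArg (Sym2.map (Subtype.val)) hc
    rwa [key e hve, key f hvf] at this
  · obtain ⟨p, hp, q, hq, hpq⟩ := hsees
    have hpv : p ≠ v := fun hc => hve (hc ▸ hp)
    have hqv : q ≠ v := fun hc => hvf (hc ▸ hq)
    refine ⟨ts p, ?_, ts q, ?_, ?_⟩
    · exact Sym2.mem_map.2 ⟨p, hp, rfl⟩
    · exact Sym2.mem_map.2 ⟨q, hq, rfl⟩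
    · rcases hpq with rfl | hpq
      · exact Or.inl rfl
      · exact Or.inr (hadj p q hpv hqv hpq)

variable {v}
variable (hore : ∀ u w : V, G.Adj u w → G.degree u + G.degree w ≤ 7)
    (hdeg : G.degree v = 5)
include hore hdeg

lemma card_nvE_of_nb {x : V} (hx : G.Adj v x) : (nvE G v x).card ≤ 1 := by
  have h1 := card_nvE_le_of_adj G v hx
  have h2 := hore v x hx
  omega

lemma card_X_le : ((G.neighborFinset v).biUnion (nvE G v)).card ≤ 5 := by
  calc ((G.neighborFinset v).biUnion (nvE G v)).card
      ≤ ∑ x ∈ G.neighborFinset v, (nvE G v x).card := Finset.card_biUnion_le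
    _ ≤ ∑ _x ∈ G.neighborFinset v, 1 := by
        refine Finset.sum_le_sum fun x hx => ?_
        exact card_nvE_of_nb G hore hdeg ((G.mem_neighborFinset v x).1 hx)
    _ = G.degree v := by rw [Finset.sum_const, smul_eq_mul, mul_one]; rfl
    _ = 5 := hdeg

lemma mem_W_facts {u w : V} (hu : G.Adj v u) (hw : w ∈ (G.neighborFinset u).erase v) :
    G.Adj u w ∧ w ≠ v ∧ G.degree u = 2 := by
  rw [Finset.mem_erase, G.mem_neighborFinset] at hw
  refine ⟨hw.2, hw.1, le_antisymm ?_ ?_⟩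
  · have := hore v u hu; omega
  · have hsub : ({v, w} : Finset V) ⊆ G.neighborFinset u := by
      intro z hz
      rcases Finset.mem_insert.1 hz with rfl | hz
      · exact (G.mem_neighborFinset u z).2 hu.symm
      · rw [Finset.mem_singleton] at hz
        exact hz ▸ (G.mem_neighborFinset u w).2 hw.2
    have hcard : ({v, w} : Finset V).card = 2 := by
      rw [Finset.card_insert_of_notMem (by simp [Ne.symm hw.1]), Finset.card_singleton]
    calc 2 = ({v, w} : Finset V).card := hcard.symm
      _ ≤ (G.neighborFinset u).card := Finset.card_le_card hsub
      _ = G.degree u := rfl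

lemma suw_mem_nvE {u w : V} (hu : G.Adj v u) (hw : w ∈ (G.neighborFinset u).erase v) :
    s(u, w) ∈ nvE G v w := by
  obtain ⟨huw, hwv, -⟩ := mem_W_facts G hore hdeg hu hw
  rw [mem_nvE]
  refine ⟨huw, Sym2.mem_mk_right u w, ?_⟩
  rw [Sym2.mem_iff]
  push_neg
  exact ⟨G.ne_of_adj hu, Ne.symm hwv⟩

lemma card_Yw_le {u w : V} (hu : G.Adj v u) (hw : w ∈ (G.neighborFinset u).erase v) :
    ((nvE G v w).erase s(u, w)).card ≤ 4 := by
  obtain ⟨huw, hwv, hdu⟩ := mem_W_facts G hore hdeg hu hw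
  have h1 : ((nvE G v w).erase s(u, w)).card = (nvE G v w).card - 1 :=
    Finset.card_erase_of_mem (suw_mem_nvE G hore hdeg hu hw)
  have h2 := card_nvE_le_degree G v w
  have h3 := hore u w huw
  omega

lemma card_W : ((G.neighborFinset u).erase v).card = G.degree u - 1 ∨
    ((G.neighborFinset u).erase v).card = G.degree u := by
  by_cases hv : v ∈ G.neighborFinset u
  · exact Or.inl (Finset.card_erase_of_mem hv)
  · exact Or.inr (congrArg Finset.card (Finset.erase_eq_of_notMem hv))

lemma card_W_le_one {u : V} (hu : G.Adj v u) : ((G.neighborFinset u).erase v).card ≤ 1 := by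
  have h1 : v ∈ G.neighborFinset u := (G.mem_neighborFinset u v).2 hu.symm
  have h2 := Finset.card_erase_of_mem h1
  have h3 := hore v u hu
  have h4 : (G.neighborFinset u).card = G.degree u := rfl
  omega

lemma card_Y_le {u : V} (hu : G.Adj v u) :
    (((G.neighborFinset u).erase v).biUnion
      (fun w => (nvE G v w).erase s(u, w))).card ≤ 4 := by
  calc (((G.neighborFinset u).erase v).biUnion (fun w => (nvE G v w).erase s(u, w))).card
      ≤ ∑ w ∈ (G.neighborFinset u).erase v, ((nvE G v w).erase s(u, w)).card :=
        Finset.card_biUnion_le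
    _ ≤ ∑ _w ∈ (G.neighborFinset u).erase v, 4 :=
        Finset.sum_le_sum fun w hw => card_Yw_le G hore hdeg hu hw
    _ = ((G.neighborFinset u).erase v).card * 4 := by rw [Finset.sum_const, smul_eq_mul]
    _ ≤ 4 := by have := card_W_le_one G hore hdeg hu; omega

lemma card_EE_le {u : V} (hu : G.Adj v u) : (EE G v u).card ≤ 9 := by
  rw [EE_eq G v hu]
  calc ((G.neighborFinset v).biUnion (nvE G v) ∪
        ((G.neighborFinset u).erase v).biUnion (fun w => (nvE G v w).erase s(u, w))).card
      ≤ ((G.neighborFinset v).biUnion (nvE G v)).card +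
        (((G.neighborFinset u).erase v).biUnion (fun w => (nvE G v w).erase s(u, w))).card :=
        Finset.card_union_le _ _
    _ ≤ 5 + 4 := Nat.add_le_add (card_X_le G hore hdeg) (card_Y_le G hore hdeg hu)
    _ = 9 := rfl

end SECaux

open SECaux Finset in
theorem statement8 {V : Type*} [Fintype V] [DecidableEq V]
    (G : SimpleGraph V) [DecidableRel G.Adj]
    (hore : ∀ u v : V, G.Adj u v → G.degree u + G.degree v ≤ 7)
    (v : V) (hdeg : G.degree v = 5)
    (h : (((⊤ : G.Subgraph).deleteVerts {v}).coe).HasStrongColoring 13) :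
    G.HasStrongColoring 13 := by
  classical
  have hNcard : (G.neighborFinset v).card = 5 := hdeg
  have hN0 : (G.neighborFinset v).Nonempty := by
    rw [← Finset.card_pos, hNcard]; omega
  obtain ⟨u₀, hu₀⟩ := hN0
  have hu₀v : u₀ ≠ v := G.ne_of_adj ((G.mem_neighborFinset v u₀).1 hu₀).symm
  obtain ⟨c, hc⟩ := transport G v u₀ hu₀v h
  set Fu : V → Finset (Fin 13) := fun u => (EE G v u).image c with hFu
  set Au : V → Finset (Fin 13) := fun u => (Fu u)ᶜ with hAu
  have hFcard : ∀ u ∈ G.neighborFinset v, (Fu u).card ≤ 9 := by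
    intro u hu
    exact le_trans Finset.card_image_le
      (card_EE_le G hore hdeg ((G.mem_neighborFinset v u).1 hu))
  have hAcard : ∀ u ∈ G.neighborFinset v, 4 ≤ (Au u).card := by
    intro u hu
    have := hFcard u hu
    rw [hAu]
    rw [Finset.card_compl, Fintype.card_fin]
    omega
  by_cases hHall : ∀ s : Finset ↥(G.neighborFinset v),
      s.card ≤ (s.biUnion (fun u => Au ↑u)).card
  · -- Hall's condition holds: extend directly
    obtain ⟨g, hginj, hg⟩ :=
      (Finset.all_card_le_biUnion_card_iff_exists_injective
        (fun (u : ↥(G.neighborFinset v)) => Au ↑u)).1 hHall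
    refine ext_lemma G v c hc
      (fun x => if hx : x ∈ G.neighborFinset v then g ⟨x, hx⟩ else 0) ?_ ?_
    · intro u u' hu hu' heq
      have hu1 : u ∈ G.neighborFinset v := (G.mem_neighborFinset v u).2 hu
      have hu2 : u' ∈ G.neighborFinset v := (G.mem_neighborFinset v u').2 hu'
      simp only [dif_pos hu1, dif_pos hu2] at heq
      exact congrArg Subtype.val (hginj heq)
    · intro u hu f hfe hvf hsees
      have hu1 : u ∈ G.neighborFinset v := (G.mem_neighborFinset v u).2 hu
      simp only [dif_pos hu1]
      have hmem := hg ⟨u, hu1⟩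
      rw [hAu, Finset.mem_compl] at hmem
      intro hcon
      exact hmem (Finset.mem_image.2 ⟨f, (mem_EE G v).2 ⟨hfe, hvf, hsees⟩, hcon.symm⟩)
  · -- Hall fails: the rigid bad case
    push_neg at hHall
    obtain ⟨s, hs⟩ := hHall
    have hvN : v ∉ G.neighborFinset v := by
      simp [SimpleGraph.irrefl]
    have hadjN : ∀ u ∈ G.neighborFinset v, G.Adj v u :=
      fun u hu => (G.mem_neighborFinset v u).1 hu
    have hsne : s.Nonempty := by
      rw [← Finset.card_pos]; omega
    obtain ⟨i₀, hi₀⟩ := hsne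
    have hbi4 : 4 ≤ (s.biUnion fun u => Au ↑u).card := by
      refine le_trans (hAcard _ i₀.2) (Finset.card_le_card ?_)
      intro γ hγ
      exact Finset.mem_biUnion.2 ⟨i₀, hi₀, hγ⟩
    have hscard : s.card ≤ 5 := by
      have := Finset.card_le_univ s
      rwa [Fintype.card_coe, hNcard] at this
    have hs5 : s.card = 5 := by omega
    have hbicard : (s.biUnion fun u => Au ↑u).card = 4 := by omega
    have hsuniv : ∀ u (hu : u ∈ G.neighborFinset v),
        (⟨u, hu⟩ : ↥(G.neighborFinset v)) ∈ s := by
      intro u hu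
      have hse : s = Finset.univ :=
        Finset.eq_univ_of_card s (by rw [Fintype.card_coe, hNcard, hs5])
      rw [hse]; exact Finset.mem_univ _
    set Abad := s.biUnion (fun u => Au ↑u) with hAbad
    have hAeq : ∀ u ∈ G.neighborFinset v, Au u = Abad := by
      intro u hu
      refine Finset.eq_of_subset_of_card_le ?_ ?_
      · intro γ hγ
        exact Finset.mem_biUnion.2 ⟨⟨u, hu⟩, hsuniv u hu, hγ⟩
      rw [hbicard]; exact hAcard u hu
    have hFeq : ∀ u ∈ G.neighborFinset v, Fu u = Abadᶜ := by
      intro u hu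
      rw [← hAeq u hu, hAu]
      simp
    have hFbadcard : (Abadᶜ).card = 9 := by
      rw [Finset.card_compl, Fintype.card_fin, hbicard]
    -- rigidity
    set X := (G.neighborFinset v).biUnion (nvE G v) with hX
    set Yu : V → Finset (Sym2 V) := fun u =>
      ((G.neighborFinset u).erase v).biUnion (fun w => (nvE G v w).erase s(u, w)) with hYudef
    have hXY : ∀ u ∈ G.neighborFinset v, EE G v u = X ∪ Yu u :=
      fun u hu => EE_eq G v (hadjN u hu)
    have hkey : ∀ u ∈ G.neighborFinset v, 9 ≤ (EE G v u).card := by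
      intro u hu
      have h1 : (Fu u).card = 9 := by rw [hFeq u hu]; exact hFbadcard
      calc 9 = (Fu u).card := h1.symm
        _ ≤ (EE G v u).card := Finset.card_image_le
    have hXle : X.card ≤ 5 := card_X_le G hore hdeg
    have hYule : ∀ u ∈ G.neighborFinset v, (Yu u).card ≤ 4 :=
      fun u hu => card_Y_le G hore hdeg (hadjN u hu)
    have hEEle : ∀ u ∈ G.neighborFinset v, (EE G v u).card ≤ X.card + (Yu u).card := by
      intro u hu
      rw [hXY u hu]; exact Finset.card_union_le _ _
    have hX5 : X.card = 5 := by
      have h1 := hkey u₀ hu₀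
      have h2 := hEEle u₀ hu₀
      have h3 := hYule u₀ hu₀
      omega
    have hYu4 : ∀ u ∈ G.neighborFinset v, (Yu u).card = 4 := by
      intro u hu
      have h1 := hkey u hu
      have h2 := hEEle u hu
      have h3 := hYule u hu
      omega
    have hEE9 : ∀ u ∈ G.neighborFinset v, (EE G v u).card = 9 := by
      intro u hu
      have h1 := hkey u hu
      have h2 := hEEle u hu
      have h3 := hYule u hu
      omega
    have hinjOn : ∀ u ∈ G.neighborFinset v, Set.InjOn c ↑(EE G v u) := by
      intro u hu
      rw [← Finset.card_image_iff]
      have h1 : (EE G v u).image c = Fu u := rfl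
      rw [h1, hFeq u hu, hFbadcard, hEE9 u hu]
    have hnvE1 : ∀ x ∈ G.neighborFinset v, (nvE G v x).card = 1 := by
      intro x hx
      have hle := card_nvE_of_nb G hore hdeg (hadjN x hx)
      rcases Nat.lt_or_ge (nvE G v x).card 1 with h0 | h1
      · exfalso
        have hempty : nvE G v x = ∅ := Finset.card_eq_zero.1 (by omega)
        have hsub : X ⊆ ((G.neighborFinset v).erase x).biUnion (nvE G v) := by
          intro f hf
          obtain ⟨y, hy, hfy⟩ := Finset.mem_biUnion.1 hf
          refine Finset.mem_biUnion.2 ⟨y, Finset.mem_erase.2 ⟨?_, hy⟩, hfy⟩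
          rintro rfl
          rw [hempty] at hfy
          exact absurd hfy (Finset.notMem_empty f)
        have hle2 : X.card ≤ 4 := by
          calc X.card ≤ (((G.neighborFinset v).erase x).biUnion (nvE G v)).card :=
                Finset.card_le_card hsub
            _ ≤ ∑ y ∈ (G.neighborFinset v).erase x, (nvE G v y).card :=
                Finset.card_biUnion_le
            _ ≤ ∑ _y ∈ (G.neighborFinset v).erase x, 1 := by
                refine Finset.sum_le_sum fun y hy => ?_
                exact card_nvE_of_nb G hore hdeg
                  (hadjN y (Finset.mem_erase.1 hy).2)
            _ = ((G.neighborFinset v).erase x).card := by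
                rw [Finset.sum_const, smul_eq_mul, mul_one]
            _ = 4 := by rw [Finset.card_erase_of_mem hx, hNcard]
        omega
      · omega
    have hW1 : ∀ u ∈ G.neighborFinset v, ∃ wu, (G.neighborFinset u).erase v = {wu} := by
      intro u hu
      rw [← Finset.card_eq_one]
      have hle := card_W_le_one G hore hdeg (hadjN u hu)
      have h4 := hYu4 u hu
      rcases Nat.lt_or_ge ((G.neighborFinset u).erase v).card 1 with h0 | h1
      · exfalso
        have hempty : (G.neighborFinset u).erase v = ∅ := Finset.card_eq_zero.1 (by omega)
        have : Yu u = ∅ := by rw [hYudef]; simp [hempty]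
        rw [this] at h4
        simp at h4
      · omega
    choose! w hwspec using hW1
    have hwmem : ∀ u ∈ G.neighborFinset v, w u ∈ (G.neighborFinset u).erase v := by
      intro u hu
      rw [hwspec u hu]
      exact Finset.mem_singleton_self _
    have hadjuw : ∀ u ∈ G.neighborFinset v, G.Adj u (w u) := by
      intro u hu
      have := hwmem u hu
      rw [Finset.mem_erase, G.mem_neighborFinset] at this
      exact this.2
    have hwnev : ∀ u ∈ G.neighborFinset v, w u ≠ v := by
      intro u hu
      exact (Finset.mem_erase.1 (hwmem u hu)).1
    have hYu_eq : ∀ u ∈ G.neighborFinset v, Yu u = (nvE G v (w u)).erase s(u, w u) := by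
      intro u hu
      rw [hYudef]
      simp only
      rw [hwspec u hu, Finset.singleton_biUnion]
    have hsuw_mem : ∀ u ∈ G.neighborFinset v, s(u, w u) ∈ nvE G v (w u) :=
      fun u hu => suw_mem_nvE G hore hdeg (hadjN u hu) (hwmem u hu)
    have hnvEw5 : ∀ u ∈ G.neighborFinset v, (nvE G v (w u)).card = 5 := by
      intro u hu
      have h1 := hYu4 u hu
      rw [hYu_eq u hu, Finset.card_erase_of_mem (hsuw_mem u hu)] at h1
      have h2 : 0 < (nvE G v (w u)).card := Finset.card_pos.2 ⟨_, hsuw_mem u hu⟩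
      omega
    have hsuw_mem_u : ∀ u ∈ G.neighborFinset v, s(u, w u) ∈ nvE G v u := by
      intro u hu
      rw [mem_nvE]
      refine ⟨hadjuw u hu, Sym2.mem_mk_left _ _, ?_⟩
      rw [Sym2.mem_iff]
      push_neg
      exact ⟨G.ne_of_adj (hadjN u hu), Ne.symm (hwnev u hu)⟩
    have hnvEu : ∀ u ∈ G.neighborFinset v, nvE G v u = {s(u, w u)} := by
      intro u hu
      obtain ⟨a, ha⟩ := Finset.card_eq_one.1 (hnvE1 u hu)
      have := hsuw_mem_u u hu
      rw [ha] at this ⊢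
      rw [Finset.mem_singleton] at this
      rw [this]
    have hwN : ∀ u ∈ G.neighborFinset v, w u ∉ G.neighborFinset v := by
      intro u hu hcon
      have h1 := hnvE1 (w u) hcon
      have h5 := hnvEw5 u hu
      omega
    have hvadjw : ∀ u ∈ G.neighborFinset v, ¬ G.Adj v (w u) :=
      fun u hu hcon => hwN u hu ((G.mem_neighborFinset v (w u)).2 hcon)
    have hdegu2 : ∀ u ∈ G.neighborFinset v, G.degree u = 2 :=
      fun u hu => (mem_W_facts G hore hdeg (hadjN u hu) (hwmem u hu)).2.2
    have hdegw : ∀ u ∈ G.neighborFinset v, G.degree (w u) = 5 := by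
      intro u hu
      have h1 : 5 ≤ G.degree (w u) := by
        rw [← hnvEw5 u hu]
        exact card_nvE_le_degree G v (w u)
      have h2 := hore u (w u) (hadjuw u hu)
      have h3 := hdegu2 u hu
      omega
    have hNu : ∀ u ∈ G.neighborFinset v, G.neighborFinset u = {v, w u} := by
      intro u hu
      have h1 : insert v ((G.neighborFinset u).erase v) = G.neighborFinset u :=
        Finset.insert_erase ((G.mem_neighborFinset u v).2 (hadjN u hu).symm)
      rw [hwspec u hu] at h1
      exact h1.symm
    -- the common color classes
    set K := X.image c with hKdef
    have hXsub : ∀ u ∈ G.neighborFinset v, X ⊆ EE G v u := by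
      intro u hu
      rw [hXY u hu]
      exact Finset.subset_union_left
    have hKcard : K.card = 5 := by
      rw [hKdef,
        Finset.card_image_of_injOn ((hinjOn u₀ hu₀).mono (Finset.coe_subset.2 (hXsub u₀ hu₀)))]
      exact hX5
    have hXmem : ∀ u ∈ G.neighborFinset v, s(u, w u) ∈ X := by
      intro u hu
      refine Finset.mem_biUnion.2 ⟨u, hu, ?_⟩
      rw [hnvEu u hu]
      exact Finset.mem_singleton_self _
    have hKsub : K ⊆ Abadᶜ := by
      rw [← hFeq u₀ hu₀]
      exact Finset.image_subset_image (hXsub u₀ hu₀)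
    have hBKcard : (Abadᶜ \ K).card = 4 := by
      rw [Finset.card_sdiff_of_subset hKsub, hFbadcard, hKcard]
    have hBu : ∀ u ∈ G.neighborFinset v,
        ((nvE G v (w u)).erase s(u, w u)).image c = Abadᶜ \ K := by
      intro u hu
      have h1 : Abadᶜ = K ∪ (Yu u).image c := by
        rw [← hFeq u hu]
        show (EE G v u).image c = _
        rw [hXY u hu, Finset.image_union]
      have hYimcard : ((Yu u).image c).card = 4 := by
        rw [Finset.card_image_of_injOn
          ((hinjOn u hu).mono (Finset.coe_subset.2 (by rw [hXY u hu]; exact Finset.subset_union_right)))]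
        exact hYu4 u hu
      have h3 : Abadᶜ \ K ⊆ (Yu u).image c := by
        rw [h1]
        intro γ hγ
        rw [Finset.mem_sdiff, Finset.mem_union] at hγ
        tauto
      have h4 := Finset.eq_of_subset_of_card_le h3 (by rw [hBKcard, hYimcard])
      rw [← hYu_eq u hu, ← h4]
    have hcdist : ∀ x ∈ G.neighborFinset v, ∀ x' ∈ G.neighborFinset v, x ≠ x' →
        c s(x, w x) ≠ c s(x', w x') := by
      intro x hx x' hx' hne hcc
      have heq := (hinjOn u₀ hu₀)
        (Finset.mem_coe.2 (hXsub u₀ hu₀ (hXmem x hx)))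
        (Finset.mem_coe.2 (hXsub u₀ hu₀ (hXmem x' hx'))) hcc
      rw [Sym2.eq_iff] at heq
      rcases heq with ⟨h1, -⟩ | ⟨h1, -⟩
      · exact hne h1
      · exact hwN x' hx' (h1 ▸ hx)
    have hwinj : ∀ u ∈ G.neighborFinset v, ∀ u' ∈ G.neighborFinset v, u ≠ u' →
        w u ≠ w u' := by
      intro u hu u' hu' hne hcon
      have hm : s(u', w u') ∈ nvE G v (w u) := by
        rw [hcon]
        exact hsuw_mem u' hu'
      have hne2 : s(u', w u') ≠ s(u, w u) := by
        intro hcon2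
        rw [Sym2.eq_iff] at hcon2
        rcases hcon2 with ⟨h1, -⟩ | ⟨h1, -⟩
        · exact hne h1.symm
        · exact hwN u hu (h1 ▸ hu')
      have hmem1 : c s(u', w u') ∈ Abadᶜ \ K := by
        rw [← hBu u hu]
        exact Finset.mem_image.2 ⟨_, Finset.mem_erase.2 ⟨hne2, hm⟩, rfl⟩
      have hmem2 : c s(u', w u') ∈ K :=
        Finset.mem_image.2 ⟨s(u', w u'), hXmem u' hu', rfl⟩
      exact (Finset.mem_sdiff.1 hmem1).2 hmem2
    -- non-adjacency facts
    have hnadjuu : ∀ a ∈ G.neighborFinset v, ∀ b ∈ G.neighborFinset v, a ≠ b →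
        ¬ G.Adj a b := by
      intro a ha b hb hab hadj
      have hbn : b ∈ G.neighborFinset a := (G.mem_neighborFinset a b).2 hadj
      rw [hNu a ha] at hbn
      rcases Finset.mem_insert.1 hbn with rfl | hb2
      · exact hvN hb
      · rw [Finset.mem_singleton] at hb2
        exact hwN a ha (hb2 ▸ hb)
    have hnadjuw : ∀ a ∈ G.neighborFinset v, ∀ b ∈ G.neighborFinset v, a ≠ b →
        ¬ G.Adj a (w b) := by
      intro a ha b hb hab hadj
      have hbn : w b ∈ G.neighborFinset a := (G.mem_neighborFinset a (w b)).2 hadj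
      rw [hNu a ha] at hbn
      rcases Finset.mem_insert.1 hbn with heq | hb2
      · exact hwnev b hb heq
      · rw [Finset.mem_singleton] at hb2
        exact hwinj b hb a ha (Ne.symm hab) hb2
    have hnadjww : ∀ a ∈ G.neighborFinset v, ∀ b ∈ G.neighborFinset v, a ≠ b →
        ¬ G.Adj (w a) (w b) := by
      intro a ha b hb hab hadj
      have := hore (w a) (w b) hadj
      rw [hdegw a ha, hdegw b hb] at this
      omega
    -- pick two distinct neighbors
    obtain ⟨u₁, hu₁, u₂, hu₂, hne12⟩ := Finset.one_lt_card.1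
      (show 1 < (G.neighborFinset v).card by rw [hNcard]; omega)
    set e₁ := s(u₁, w u₁) with he₁
    set e₂ := s(u₂, w u₂) with he₂
    have hnosee : ¬ G.Sees e₁ e₂ := by
      rintro ⟨p, hp, q, hq, hpq⟩
      rw [he₁, Sym2.mem_iff] at hp
      rw [he₂, Sym2.mem_iff] at hq
      have hpq' : p = q ∨ G.Adj p q := hpq
      rcases hp with hp | hp <;> rcases hq with hq | hq <;> rw [hp, hq] at hpq'
      · rcases hpq' with heq | hadj
        · exact hne12 heq
        · exact hnadjuu u₁ hu₁ u₂ hu₂ hne12 hadj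
      · rcases hpq' with heq | hadj
        · exact hwN u₂ hu₂ (heq ▸ hu₁)
        · exact hnadjuw u₁ hu₁ u₂ hu₂ hne12 hadj
      · rcases hpq' with heq | hadj
        · exact hwN u₁ hu₁ (heq.symm ▸ hu₂)
        · exact hnadjuw u₂ hu₂ u₁ hu₁ (Ne.symm hne12) hadj.symm
      · rcases hpq' with heq | hadj
        · exact hwinj u₁ hu₁ u₂ hu₂ hne12 heq
        · exact hnadjww u₁ hu₁ u₂ hu₂ hne12 hadj
    have he12ne : e₁ ≠ e₂ := by
      intro hcon
      rw [he₁, he₂, Sym2.eq_iff] at hcon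
      rcases hcon with ⟨h1, -⟩ | ⟨h1, -⟩
      · exact hne12 h1
      · exact hwN u₂ hu₂ (h1.symm ▸ hu₁)
    -- the set D of old edges seeing e₁ or e₂
    set D := G.edgeFinset.filter
      (fun f => v ∉ f ∧ f ≠ e₁ ∧ f ≠ e₂ ∧ (G.Sees e₁ f ∨ G.Sees e₂ f)) with hDdef
    set Cu : V → Finset (Fin 13) := fun u =>
      (((G.neighborFinset (w u)).erase u).biUnion
        (fun x => (nvE G v x).erase s(w u, x))).image c with hCudef
    have hDhalf : ∀ u ∈ G.neighborFinset v, ∀ f, f ∈ G.edgeSet → v ∉ f →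
        f ≠ s(u, w u) → G.Sees s(u, w u) f →
        f ∈ (nvE G v (w u)).erase s(u, w u) ∪
          ((G.neighborFinset (w u)).erase u).biUnion
            (fun x => (nvE G v x).erase s(w u, x)) := by
      intro u hu f hfedge hvf hfne hsees
      obtain ⟨p, hp, q, hq, hpq⟩ := hsees
      rw [Sym2.mem_iff] at hp
      have hqv : q ≠ v := fun hcon => hvf (hcon ▸ hq)
      have hqu : u ∈ f → False := by
        intro hqf
        have : f ∈ nvE G v u := (mem_nvE G v).2 ⟨hfedge, hqf, hvf⟩
        rw [hnvEu u hu] at this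
        exact hfne (Finset.mem_singleton.1 this)
      have hqw : w u ∈ f →
          f ∈ (nvE G v (w u)).erase s(u, w u) ∪
            ((G.neighborFinset (w u)).erase u).biUnion
              (fun x => (nvE G v x).erase s(w u, x)) := by
        intro hwf
        exact Finset.mem_union_left _
          (Finset.mem_erase.2 ⟨hfne, (mem_nvE G v).2 ⟨hfedge, hwf, hvf⟩⟩)
      rcases hp with rfl | rfl
      · rcases hpq with heq | hadj
        · exact absurd (heq ▸ hq) (fun hx => hqu hx)
        · have : q ∈ G.neighborFinset p := (G.mem_neighborFinset p q).2 hadj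
          rw [hNu p hu] at this
          rcases Finset.mem_insert.1 this with rfl | h2
          · exact absurd rfl hqv
          · rw [Finset.mem_singleton] at h2
            exact hqw (h2 ▸ hq)
      · rcases hpq with heq | hadj
        · exact hqw (heq ▸ hq)
        · by_cases hqu' : q = u
          · exact absurd (hqu' ▸ hq) (fun hx => hqu hx)
          · by_cases hfwq : f = s(w u, q)
            · refine hqw ?_
              rw [hfwq]
              exact Sym2.mem_mk_left _ _
            · refine Finset.mem_union_right _ (Finset.mem_biUnion.2 ⟨q, ?_, ?_⟩)
              · exact Finset.mem_erase.2 ⟨hqu', (G.mem_neighborFinset (w u) q).2 hadj⟩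
              · exact Finset.mem_erase.2 ⟨hfwq, (mem_nvE G v).2 ⟨hfedge, hq, hvf⟩⟩
    have hCcard : ∀ u ∈ G.neighborFinset v, (Cu u).card ≤ 4 := by
      intro u hu
      rw [hCudef]
      refine le_trans Finset.card_image_le ?_
      calc (((G.neighborFinset (w u)).erase u).biUnion
            (fun x => (nvE G v x).erase s(w u, x))).card
          ≤ ∑ x ∈ (G.neighborFinset (w u)).erase u, ((nvE G v x).erase s(w u, x)).card :=
            Finset.card_biUnion_le
        _ ≤ ∑ _x ∈ (G.neighborFinset (w u)).erase u, 1 := by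
            refine Finset.sum_le_sum fun x hx => ?_
            rw [Finset.mem_erase, G.mem_neighborFinset] at hx
            have hadjwx : G.Adj (w u) x := hx.2
            have hxv : x ≠ v := by
              rintro rfl
              exact hvadjw u hu hadjwx.symm
            have hmem : s(w u, x) ∈ nvE G v x := by
              rw [mem_nvE]
              refine ⟨hadjwx, Sym2.mem_mk_right _ _, ?_⟩
              rw [Sym2.mem_iff]
              push_neg
              exact ⟨Ne.symm (hwnev u hu), Ne.symm hxv⟩
            have h1 : ((nvE G v x).erase s(w u, x)).card = (nvE G v x).card - 1 :=
              Finset.card_erase_of_mem hmem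
            have h2 := card_nvE_le_degree G v x
            have h3 := hore (w u) x hadjwx
            have h4 := hdegw u hu
            omega
        _ = ((G.neighborFinset (w u)).erase u).card := by
            rw [Finset.sum_const, smul_eq_mul, mul_one]
        _ ≤ 4 := by
            have h1 : u ∈ G.neighborFinset (w u) :=
              (G.mem_neighborFinset _ _).2 (hadjuw u hu).symm
            rw [Finset.card_erase_of_mem h1]
            have h2 : (G.neighborFinset (w u)).card = G.degree (w u) := rfl
            have h3 := hdegw u hu
            omega
    have hDim : D.image c ⊆ (Abadᶜ \ K) ∪ (Cu u₁ ∪ Cu u₂) := by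
      intro γ hγ
      obtain ⟨f, hfD, rfl⟩ := Finset.mem_image.1 hγ
      rw [hDdef, Finset.mem_filter] at hfD
      obtain ⟨hfe, hvf, hne1, hne2, hsor⟩ := hfD
      have hfedge : f ∈ G.edgeSet := SimpleGraph.mem_edgeFinset.1 hfe
      rcases hsor with hsee | hsee
      · rcases Finset.mem_union.1 (hDhalf u₁ hu₁ f hfedge hvf hne1 hsee) with hf1 | hf1
        · exact Finset.mem_union_left _ (by rw [← hBu u₁ hu₁]; exact Finset.mem_image_of_mem c hf1)
        · exact Finset.mem_union_right _ (Finset.mem_union_left _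
            (by rw [hCudef]; exact Finset.mem_image_of_mem c hf1))
      · rcases Finset.mem_union.1 (hDhalf u₂ hu₂ f hfedge hvf hne2 hsee) with hf1 | hf1
        · exact Finset.mem_union_left _ (by rw [← hBu u₂ hu₂]; exact Finset.mem_image_of_mem c hf1)
        · exact Finset.mem_union_right _ (Finset.mem_union_right _
            (by rw [hCudef]; exact Finset.mem_image_of_mem c hf1))
    have hDcard : (D.image c).card ≤ 12 := by
      calc (D.image c).card ≤ ((Abadᶜ \ K) ∪ (Cu u₁ ∪ Cu u₂)).card :=
            Finset.card_le_card hDim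
        _ ≤ (Abadᶜ \ K).card + (Cu u₁ ∪ Cu u₂).card := Finset.card_union_le _ _
        _ ≤ (Abadᶜ \ K).card + ((Cu u₁).card + (Cu u₂).card) :=
            Nat.add_le_add_left (Finset.card_union_le _ _) _
        _ ≤ 4 + (4 + 4) := by
            have := hCcard u₁ hu₁
            have := hCcard u₂ hu₂
            omega
        _ = 12 := rfl
    obtain ⟨δ, hδ⟩ : ∃ δ : Fin 13, δ ∉ D.image c := by
      have hne : ((D.image c)ᶜ : Finset (Fin 13)).Nonempty := by
        rw [← Finset.card_pos, Finset.card_compl, Fintype.card_fin]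
        omega
      obtain ⟨δ, hδ⟩ := hne
      exact ⟨δ, Finset.mem_compl.1 hδ⟩
    set c₂ : Sym2 V → Fin 13 := fun f => if f = e₁ ∨ f = e₂ then δ else c f with hc₂def
    have hc₂old : ∀ f, f ≠ e₁ → f ≠ e₂ → c₂ f = c f := by
      intro f h1 h2
      rw [hc₂def]
      simp only [if_neg (by tauto : ¬(f = e₁ ∨ f = e₂))]
    have hc₂new : ∀ f, (f = e₁ ∨ f = e₂) → c₂ f = δ := by
      intro f h1
      rw [hc₂def]
      simp only [if_pos h1]
    have hmemD : ∀ f ∈ G.edgeSet, v ∉ f → f ≠ e₁ → f ≠ e₂ →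
        (G.Sees e₁ f ∨ G.Sees e₂ f) → f ∈ D := by
      intro f hf hvf h1 h2 h3
      rw [hDdef, Finset.mem_filter]
      exact ⟨SimpleGraph.mem_edgeFinset.2 hf, hvf, h1, h2, h3⟩
    have hold₂ : ∀ e ∈ G.edgeSet, ∀ f ∈ G.edgeSet, v ∉ e → v ∉ f → e ≠ f →
        G.Sees e f → c₂ e ≠ c₂ f := by
      intro e he f hf hve hvf hnef hsees
      by_cases he12 : e = e₁ ∨ e = e₂ <;> by_cases hf12 : f = e₁ ∨ f = e₂
      · exfalso
        rcases he12 with rfl | rfl <;> rcases hf12 with rfl | rfl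
        · exact hnef rfl
        · exact hnosee hsees
        · exact hnosee (sees_symm G hsees)
        · exact hnef rfl
      · push_neg at hf12
        rw [hc₂new e he12, hc₂old f hf12.1 hf12.2]
        have hfD : f ∈ D := by
          refine hmemD f hf hvf hf12.1 hf12.2 ?_
          rcases he12 with rfl | rfl
          · exact Or.inl hsees
          · exact Or.inr hsees
        intro hcon
        exact hδ (Finset.mem_image.2 ⟨f, hfD, hcon.symm⟩)
      · push_neg at he12
        rw [hc₂new f hf12, hc₂old e he12.1 he12.2]
        have heD : e ∈ D := by
          refine hmemD e he hve he12.1 he12.2 ?_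
          rcases hf12 with rfl | rfl
          · exact Or.inl (sees_symm G hsees)
          · exact Or.inr (sees_symm G hsees)
        intro hcon
        exact hδ (Finset.mem_image.2 ⟨e, heD, hcon⟩)
      · push_neg at he12 hf12
        rw [hc₂old e he12.1 he12.2, hc₂old f hf12.1 hf12.2]
        exact hc e he f hf hve hvf hnef hsees
    -- the pool of free colors
    set Q := (K \ {c e₁, c e₂}) ∪ ((Abadᶜ \ K) ∪ {δ}) with hQdef
    have hQcard : Q.card ≤ 8 := by
      have hpair : ({c e₁, c e₂} : Finset (Fin 13)) ⊆ K := by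
        intro γ hγ
        rcases Finset.mem_insert.1 hγ with rfl | hγ
        · exact Finset.mem_image_of_mem c (hXmem u₁ hu₁)
        · rw [Finset.mem_singleton] at hγ
          rw [hγ]
          exact Finset.mem_image_of_mem c (hXmem u₂ hu₂)
      have hpcard : ({c e₁, c e₂} : Finset (Fin 13)).card = 2 := by
        rw [Finset.card_insert_of_notMem
          (by rw [Finset.mem_singleton]; exact hcdist u₁ hu₁ u₂ hu₂ hne12),
          Finset.card_singleton]
      have h1 : (K \ {c e₁, c e₂}).card = 3 := by
        rw [Finset.card_sdiff_of_subset hpair, hKcard, hpcard]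
      calc Q.card ≤ (K \ {c e₁, c e₂}).card + ((Abadᶜ \ K) ∪ {δ}).card :=
            Finset.card_union_le _ _
        _ ≤ (K \ {c e₁, c e₂}).card + ((Abadᶜ \ K).card + 1) := by
            have := Finset.card_union_le (Abadᶜ \ K) ({δ} : Finset (Fin 13))
            simp only [Finset.card_singleton] at this
            omega
        _ ≤ 8 := by rw [h1, hBKcard]
    have hQsub : ∀ u ∈ G.neighborFinset v, (EE G v u).image c₂ ⊆ Q := by
      intro u hu γ hγ
      obtain ⟨f, hfE, rfl⟩ := Finset.mem_image.1 hγ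
      by_cases hf12 : f = e₁ ∨ f = e₂
      · rw [hc₂new f hf12]
        exact Finset.mem_union_right _ (Finset.mem_union_right _ (Finset.mem_singleton_self δ))
      · push_neg at hf12
        rw [hc₂old f hf12.1 hf12.2]
        rw [hXY u hu] at hfE
        rcases Finset.mem_union.1 hfE with hfX | hfY
        · obtain ⟨x, hx, hfx⟩ := Finset.mem_biUnion.1 hfX
          rw [hnvEu x hx] at hfx
          have hfeq : f = s(x, w x) := Finset.mem_singleton.1 hfx
          have hxne1 : x ≠ u₁ := by rintro rfl; exact hf12.1 hfeq
          have hxne2 : x ≠ u₂ := by rintro rfl; exact hf12.2 hfeq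
          refine Finset.mem_union_left _ (Finset.mem_sdiff.2 ⟨?_, ?_⟩)
          · rw [hfeq]
            exact Finset.mem_image_of_mem c (hXmem x hx)
          · intro hcon
            rcases Finset.mem_insert.1 hcon with hcon1 | hcon1
            · exact hcdist x hx u₁ hu₁ hxne1 (by rw [← hfeq]; exact hcon1)
            · rw [Finset.mem_singleton] at hcon1
              exact hcdist x hx u₂ hu₂ hxne2 (by rw [← hfeq]; exact hcon1)
        · rw [hYu_eq u hu] at hfY
          refine Finset.mem_union_right _ (Finset.mem_union_left _ ?_)
          rw [← hBu u hu]
          exact Finset.mem_image_of_mem c hfY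
    have hQccard : 5 ≤ (Qᶜ : Finset (Fin 13)).card := by
      rw [Finset.card_compl, Fintype.card_fin]
      omega
    obtain ⟨emb⟩ : Nonempty (↥(G.neighborFinset v) ↪ ↥(Qᶜ : Finset (Fin 13))) := by
      refine Function.Embedding.nonempty_of_card_le ?_
      rw [Fintype.card_coe, Fintype.card_coe, hNcard]
      omega
    refine ext_lemma G v c₂ hold₂
      (fun x => if hx : x ∈ G.neighborFinset v then (emb ⟨x, hx⟩ : Fin 13) else 0) ?_ ?_
    · intro u u' hu hu' heq
      have hu1 : u ∈ G.neighborFinset v := (G.mem_neighborFinset v u).2 hu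
      have hu2 : u' ∈ G.neighborFinset v := (G.mem_neighborFinset v u').2 hu'
      simp only [dif_pos hu1, dif_pos hu2] at heq
      have := emb.injective (Subtype.ext heq)
      exact congrArg Subtype.val this
    · intro u hu f hfe hvf hsees
      have hu1 : u ∈ G.neighborFinset v := (G.mem_neighborFinset v u).2 hu
      simp only [dif_pos hu1]
      have hmem : (emb ⟨u, hu1⟩ : Fin 13) ∈ (Qᶜ : Finset (Fin 13)) := (emb ⟨u, hu1⟩).2
      rw [Finset.mem_compl] at hmem
      intro hcon
      apply hmem
      apply hQsub u hu1
      exact Finset.mem_image.2 ⟨f, (mem_EE G v).2 ⟨hfe, hvf, hsees⟩, hcon.symm⟩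
end

section
/- Let G be a finite simple graph with Ore-degree θ(G) ≤ 7, and let v be a vertex of G of degree 2 with neighbors u₁ and u₂, where deg(u₂) ≤ 3. If the graph G − v obtained by deleting v admits a strong edge-coloring with 13 colors, then G admits a strong edge-coloring with 13 colors. -/
lemma my_sees_symm {V : Type*} (G : SimpleGraph V) {e f : Sym2 V} (h : G.Sees e f) :
    G.Sees f e := by
  obtain ⟨p, hp, q, hq, hpq⟩ := h
  exact ⟨q, hq, p, hp, hpq.imp Eq.symm (fun h' => h'.symm)⟩

/-- The covering finset of edges that can see the edge `s(v,x)`, when the neighbors of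
`v` are among `{x, y}` and the target edges avoid `v`. -/
def seCover {V : Type*} [Fintype V] [DecidableEq V] (G : SimpleGraph V) [DecidableRel G.Adj]
    (v x y : V) : Finset (Sym2 V) :=
  ((G.incidenceFinset x).erase s(x,v)) ∪ ((G.incidenceFinset y).erase s(y,v)) ∪
    ((G.neighborFinset x).erase v).biUnion (fun w => (G.incidenceFinset w).erase s(w,x))

lemma mem_seCover {V : Type*} [Fintype V] [DecidableEq V] (G : SimpleGraph V)
    [DecidableRel G.Adj] (v x y : V)
    (hN : ∀ w, G.Adj v w → w = x ∨ w = y)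
    (f : Sym2 V) (hf : f ∈ G.edgeSet) (hvf : v ∉ f) (hsee : G.Sees s(v,x) f) :
    f ∈ seCover G v x y := by
  have hinc : ∀ a : V, a ∈ f → f ∈ G.incidenceFinset a := by
    intro a ha
    rw [SimpleGraph.mem_incidenceFinset]
    exact ⟨hf, ha⟩
  have hx' : x ∈ f → f ∈ seCover G v x y := by
    intro hxf
    refine Finset.mem_union_left _ (Finset.mem_union_left _ (Finset.mem_erase.2 ⟨?_, hinc x hxf⟩))
    rintro rfl
    exact hvf (Sym2.mem_mk_right x v)
  have hy' : y ∈ f → f ∈ seCover G v x y := by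
    intro hyf
    refine Finset.mem_union_left _ (Finset.mem_union_right _ (Finset.mem_erase.2 ⟨?_, hinc y hyf⟩))
    rintro rfl
    exact hvf (Sym2.mem_mk_right y v)
  have hw' : ∀ w, G.Adj x w → w ∈ f → x ∉ f → f ∈ seCover G v x y := by
    intro w hxw hwf hxf
    refine Finset.mem_union_right _ (Finset.mem_biUnion.2 ⟨w, ?_, Finset.mem_erase.2 ⟨?_, hinc w hwf⟩⟩)
    · refine Finset.mem_erase.2 ⟨?_, (G.mem_neighborFinset x w).2 hxw⟩
      rintro rfl
      exact hvf hwf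
    · rintro rfl
      exact hxf (Sym2.mem_mk_right w x)
  obtain ⟨p, hp, q, hq, hpq⟩ := hsee
  rw [Sym2.mem_iff] at hp
  rcases hp with rfl | rfl
  · rcases hpq with rfl | hpq
    · exact absurd hq hvf
    · rcases hN q hpq with rfl | rfl
      · exact hx' hq
      · exact hy' hq
  · rcases hpq with rfl | hpq
    · exact hx' hq
    · by_cases hxf : p ∈ f
      · exact hx' hxf
      · exact hw' q hpq hq hxf

lemma seCover_card {V : Type*} [Fintype V] [DecidableEq V] (G : SimpleGraph V)
    [DecidableRel G.Adj] (v x y : V) (hvx : G.Adj v x) (hvy : G.Adj v y)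
    (hore : ∀ u w : V, G.Adj u w → G.degree u + G.degree w ≤ 7) :
    (seCover G v x y).card ≤
      (G.degree x - 1) + (G.degree y - 1) + (G.degree x - 1) * (6 - G.degree x) := by
  have hix : s(x,v) ∈ G.incidenceFinset x := by
    rw [SimpleGraph.mem_incidenceFinset]
    exact ⟨hvx.symm, Sym2.mem_mk_left x v⟩
  have hiy : s(y,v) ∈ G.incidenceFinset y := by
    rw [SimpleGraph.mem_incidenceFinset]
    exact ⟨hvy.symm, Sym2.mem_mk_left y v⟩
  have hcx : ((G.incidenceFinset x).erase s(x,v)).card = G.degree x - 1 := by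
    rw [Finset.card_erase_of_mem hix, G.card_incidenceFinset_eq_degree]
  have hcy : ((G.incidenceFinset y).erase s(y,v)).card = G.degree y - 1 := by
    rw [Finset.card_erase_of_mem hiy, G.card_incidenceFinset_eq_degree]
  have hbi : (((G.neighborFinset x).erase v).biUnion
      (fun w => (G.incidenceFinset w).erase s(w,x))).card ≤
      (G.degree x - 1) * (6 - G.degree x) := by
    refine le_trans (Finset.card_biUnion_le) ?_
    have hsum : ∀ w ∈ (G.neighborFinset x).erase v,
        ((G.incidenceFinset w).erase s(w,x)).card ≤ 6 - G.degree x := by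
      intro w hw
      rw [Finset.mem_erase, SimpleGraph.mem_neighborFinset] at hw
      have hiw : s(w,x) ∈ G.incidenceFinset w := by
        rw [SimpleGraph.mem_incidenceFinset]
        exact ⟨hw.2.symm, Sym2.mem_mk_left w x⟩
      rw [Finset.card_erase_of_mem hiw, G.card_incidenceFinset_eq_degree]
      have := hore x w hw.2
      omega
    refine le_trans (Finset.sum_le_card_nsmul _ _ _ hsum) ?_
    rw [smul_eq_mul]
    have : ((G.neighborFinset x).erase v).card = G.degree x - 1 := by
      rw [Finset.card_erase_of_mem ((G.mem_neighborFinset x v).2 hvx.symm),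
        G.card_neighborFinset_eq_degree]
    rw [this]
  calc (seCover G v x y).card
      ≤ (((G.incidenceFinset x).erase s(x,v)) ∪ ((G.incidenceFinset y).erase s(y,v))).card
        + (((G.neighborFinset x).erase v).biUnion
            (fun w => (G.incidenceFinset w).erase s(w,x))).card := Finset.card_union_le _ _
    _ ≤ ((G.incidenceFinset x).erase s(x,v)).card + ((G.incidenceFinset y).erase s(y,v)).card
        + (((G.neighborFinset x).erase v).biUnion
            (fun w => (G.incidenceFinset w).erase s(w,x))).card := by
          exact Nat.add_le_add_right (Finset.card_union_le _ _) _
    _ ≤ (G.degree x - 1) + (G.degree y - 1) + (G.degree x - 1) * (6 - G.degree x) := by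
          rw [hcx, hcy]
          exact Nat.add_le_add_left hbi _

theorem statement9 {V : Type*} [Fintype V] [DecidableEq V]
    (G : SimpleGraph V) [DecidableRel G.Adj]
    (hore : ∀ u v : V, G.Adj u v → G.degree u + G.degree v ≤ 7)
    (v u₁ u₂ : V) (hdeg : G.degree v = 2)
    (h₁ : G.Adj v u₁) (h₂ : G.Adj v u₂) (hne : u₁ ≠ u₂)
    (hu₂ : G.degree u₂ ≤ 3)
    (h : (((⊤ : G.Subgraph).deleteVerts {v}).coe).HasStrongColoring 13) :
    G.HasStrongColoring 13 := by
  classical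
  obtain ⟨c', hc'⟩ := h
  have hu₁v : u₁ ≠ v := h₁.ne'
  have hu₂v : u₂ ≠ v := h₂.ne'
  have hmem : ∀ x : V, x ≠ v → x ∈ ((⊤ : G.Subgraph).deleteVerts {v}).verts := by
    intro x hx
    simp [hx]
  set φ : V → ((⊤ : G.Subgraph).deleteVerts {v}).verts :=
    fun x => if hx : x = v then ⟨u₁, hmem u₁ hu₁v⟩ else ⟨x, hmem x hx⟩ with hφ
  have hφval : ∀ (x : V), x ≠ v → (φ x : V) = x := by
    intro x hx
    simp [hφ, hx]
  have hadj : ∀ (a b : V), a ≠ v → b ≠ v → G.Adj a b →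
      (((⊤ : G.Subgraph).deleteVerts {v}).coe).Adj (φ a) (φ b) := by
    intro a b ha hb hab
    simp [SimpleGraph.Subgraph.coe_adj, SimpleGraph.Subgraph.deleteVerts_adj,
      hφval a ha, hφval b hb, ha, hb, hab]
  -- neighbors of v are exactly u₁, u₂
  have hNv : ∀ w, G.Adj v w → w = u₁ ∨ w = u₂ := by
    intro w hw
    by_contra hcon
    push_neg at hcon
    have hsub : ({u₁, u₂, w} : Finset V) ⊆ G.neighborFinset v := by
      intro z hz
      simp only [Finset.mem_insert, Finset.mem_singleton] at hz
      rcases hz with rfl | rfl | rfl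
      · exact (G.mem_neighborFinset _ _).2 h₁
      · exact (G.mem_neighborFinset _ _).2 h₂
      · exact (G.mem_neighborFinset _ _).2 hw
    have hcard : ({u₁, u₂, w} : Finset V).card = 3 :=
      Finset.card_eq_three.2 ⟨u₁, u₂, w, hne, Ne.symm hcon.1, Ne.symm hcon.2, rfl⟩
    have hle := Finset.card_le_card hsub
    rw [hcard, G.card_neighborFinset_eq_degree, hdeg] at hle
    omega
  have hvedge : ∀ f ∈ G.edgeSet, v ∈ f → f = s(v,u₁) ∨ f = s(v,u₂) := by
    intro f hf hvf
    induction f with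
    | _ x y =>
      rw [SimpleGraph.mem_edgeSet] at hf
      rw [Sym2.mem_iff] at hvf
      rcases hvf with rfl | rfl
      · rcases hNv y hf with rfl | rfl
        · exact Or.inl rfl
        · exact Or.inr rfl
      · rcases hNv x hf.symm with rfl | rfl
        · exact Or.inl (Sym2.eq_swap)
        · exact Or.inr (Sym2.eq_swap)
  have hd₁ : G.degree u₁ ≤ 5 := by
    have := hore v u₁ h₁
    omega
  have hexists : ∀ s : Finset (Fin 13), s.card < 13 → ∃ a, a ∉ s := by
    intro s hs
    by_contra hcon
    push_neg at hcon
    have hsubs : (Finset.univ : Finset (Fin 13)) ⊆ s := fun a _ => hcon a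
    have := Finset.card_le_card hsubs
    simp [Finset.card_univ] at this
    omega
  have harith : ∀ a b : ℕ, a ≤ 3 → b ≤ 5 → (a-1)+(b-1)+(a-1)*(6-a) ≤ 12 := by
    intro a b ha hb
    interval_cases a <;> omega
  have harith1 : ∀ a b : ℕ, a ≤ 3 → b ≤ 5 → (b-1)+(a-1)+(b-1)*(6-b) ≤ 11 := by
    intro a b ha hb
    interval_cases b <;> omega
  -- choose colors
  obtain ⟨a₂, ha₂⟩ := hexists ((seCover G v u₂ u₁).image (fun f => c' (f.map φ)))
    (by
      have h1 := Finset.card_image_le (s := seCover G v u₂ u₁) (f := fun f => c' (f.map φ))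
      have h2 := seCover_card G v u₂ u₁ h₂ h₁ hore
      have h3 := harith (G.degree u₂) (G.degree u₁) hu₂ hd₁
      omega)
  obtain ⟨a₁, ha₁⟩ := hexists (insert a₂ ((seCover G v u₁ u₂).image (fun f => c' (f.map φ))))
    (by
      have h0 := Finset.card_insert_le a₂ ((seCover G v u₁ u₂).image (fun f => c' (f.map φ)))
      have h1 := Finset.card_image_le (s := seCover G v u₁ u₂) (f := fun f => c' (f.map φ))
      have h2 := seCover_card G v u₁ u₂ h₁ h₂ hore
      have h3 := harith1 (G.degree u₂) (G.degree u₁) hu₂ hd₁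
      omega)
  have ha₁₂ : a₁ ≠ a₂ := fun hq => ha₁ (by rw [hq]; exact Finset.mem_insert_self a₂ _)
  have ha₁' : ∀ f ∈ seCover G v u₁ u₂, a₁ ≠ c' (f.map φ) := by
    intro f hf hq
    exact ha₁ (by rw [hq]; exact Finset.mem_insert_of_mem (Finset.mem_image_of_mem _ hf))
  have ha₂' : ∀ f ∈ seCover G v u₂ u₁, a₂ ≠ c' (f.map φ) := by
    intro f hf hq
    exact ha₂ (by rw [hq]; exact Finset.mem_image_of_mem _ hf)
  refine ⟨fun e => if e = s(v,u₁) then a₁ else if e = s(v,u₂) then a₂ else c' (e.map φ), ?_⟩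
  have hE : s(v,u₁) ≠ s(v,u₂) := by
    simp [Sym2.eq_iff, hne, h₂.ne]
  intro e he f hf hef hsees
  have hnotv : ∀ g ∈ G.edgeSet, g ≠ s(v,u₁) → g ≠ s(v,u₂) → v ∉ g := by
    intro g hg hg1 hg2 hvg
    rcases hvedge g hg hvg with e' | e'
    · exact hg1 e'
    · exact hg2 e'
  by_cases he1 : e = s(v,u₁)
  · subst he1
    by_cases hf1 : f = s(v,u₁)
    · exact absurd hf1.symm hef
    · by_cases hf2 : f = s(v,u₂)
      · subst hf2
        simpa [hne, Ne.symm hne, h₁.ne, h₂.ne, hu₁v, hu₂v] using ha₁₂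
      · have hcov : f ∈ seCover G v u₁ u₂ :=
          mem_seCover G v u₁ u₂ hNv f hf (hnotv f hf hf1 hf2) hsees
        simpa [hf1, hf2] using ha₁' f hcov
  · by_cases he2 : e = s(v,u₂)
    · subst he2
      by_cases hf1 : f = s(v,u₁)
      · subst hf1
        simpa [hne, Ne.symm hne, h₁.ne, h₂.ne, hu₁v, hu₂v] using ha₁₂.symm
      · by_cases hf2 : f = s(v,u₂)
        · exact absurd hf2.symm hef
        · have hcov : f ∈ seCover G v u₂ u₁ :=
            mem_seCover G v u₂ u₁ (fun w hw => (hNv w hw).symm) f hf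
              (hnotv f hf hf1 hf2) hsees
          simpa [hne, Ne.symm hne, h₁.ne, h₂.ne, hu₁v, hu₂v, hf1, hf2] using ha₂' f hcov
    · have hve : v ∉ e := hnotv e he he1 he2
      by_cases hf1 : f = s(v,u₁)
      · subst hf1
        have hcov : e ∈ seCover G v u₁ u₂ :=
          mem_seCover G v u₁ u₂ hNv e he hve (my_sees_symm G hsees)
        simpa [he1, he2] using (ha₁' e hcov).symm
      · by_cases hf2 : f = s(v,u₂)
        · subst hf2
          have hcov : e ∈ seCover G v u₂ u₁ :=
            mem_seCover G v u₂ u₁ (fun w hw => (hNv w hw).symm) e he hve (my_sees_symm G hsees)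
          simpa [hne, Ne.symm hne, h₁.ne, h₂.ne, hu₁v, hu₂v, he1, he2] using (ha₂' e hcov).symm
        · -- both edges avoid v: lift everything to the deleted graph
          have hvf : v ∉ f := hnotv f hf hf1 hf2
          simp only [if_neg he1, if_neg he2, if_neg hf1, if_neg hf2]
          clear he1 he2 hf1 hf2
          revert he hf hef hsees hve hvf
          induction e with
          | _ x y =>
            induction f with
            | _ z w =>
              intro he hf hef hsees hve hvf
              have hx : x ≠ v := fun hh => hve (hh ▸ Sym2.mem_mk_left x y)
              have hy : y ≠ v := fun hh => hve (hh ▸ Sym2.mem_mk_right x y)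
              have hz : z ≠ v := fun hh => hvf (hh ▸ Sym2.mem_mk_left z w)
              have hw : w ≠ v := fun hh => hvf (hh ▸ Sym2.mem_mk_right z w)
              rw [SimpleGraph.mem_edgeSet] at he hf
              have hback : ∀ (p q : V), p ≠ v → q ≠ v →
                  Sym2.map Subtype.val (Sym2.map φ s(p,q)) = s(p,q) := by
                intro p q hp hq
                rw [Sym2.map_pair_eq, Sym2.map_pair_eq, hφval p hp, hφval q hq]
              refine hc' (Sym2.map φ s(x,y)) ?_ (Sym2.map φ s(z,w)) ?_ ?_ ?_
              · rw [Sym2.map_pair_eq, SimpleGraph.mem_edgeSet]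
                exact hadj x y hx hy he
              · rw [Sym2.map_pair_eq, SimpleGraph.mem_edgeSet]
                exact hadj z w hz hw hf
              · intro hq
                exact hef (by rw [← hback x y hx hy, ← hback z w hz hw, hq])
              · obtain ⟨p, hp, q, hq, hpq⟩ := hsees
                have hpv : p ≠ v := fun hh => hve (hh ▸ hp)
                have hqv : q ≠ v := fun hh => hvf (hh ▸ hq)
                refine ⟨φ p, ?_, φ q, ?_, ?_⟩
                · rw [Sym2.map_pair_eq]
                  rcases Sym2.mem_iff.1 hp with rfl | rfl
                  · exact Sym2.mem_mk_left _ _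
                  · exact Sym2.mem_mk_right _ _
                · rw [Sym2.map_pair_eq]
                  rcases Sym2.mem_iff.1 hq with rfl | rfl
                  · exact Sym2.mem_mk_left _ _
                  · exact Sym2.mem_mk_right _ _
                · rcases hpq with rfl | hpq
                  · exact Or.inl rfl
                  · exact Or.inr (hadj p q hpv hqv hpq)
end

section
/- Let G be a finite simple graph with Ore-degree θ(G) ≤ 7, and let v be a vertex of G of degree 4 having at least three neighbors of degree 2. If the graph G − v obtained by deleting v admits a strong edge-coloring with 13 colors, then G admits a strong edge-coloring with 13 colors. -/
set_option linter.unusedSectionVars false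
set_option maxHeartbeats 1000000

section Aux

lemma sees_symm {V : Type*} {G : SimpleGraph V} {e f : Sym2 V} (h : G.Sees e f) : G.Sees f e := by
  obtain ⟨a, ha, b, hb, hab⟩ := h
  exact ⟨b, hb, a, ha, hab.imp Eq.symm (fun h => h.symm)⟩

variable {V : Type*} [Fintype V] [DecidableEq V] (G : SimpleGraph V) [DecidableRel G.Adj]
  (v : V) (ι : V → ↥((⊤ : G.Subgraph).deleteVerts {v}).verts)
  (hι : ∀ x, x ≠ v → ((ι x : V)) = x)

include hι

lemma map_iota_id {e : Sym2 V} (he : v ∉ e) :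
    Sym2.map (fun x => ((ι x : V))) e = e := by
  induction e using Sym2.ind with
  | _ a b =>
    simp only [Sym2.mem_iff, not_or] at he
    simp [Sym2.map_pair_eq, hι a (fun h => he.1 h.symm), hι b (fun h => he.2 h.symm)]

lemma map_iota_inj {e f : Sym2 V} (he : v ∉ e) (hf : v ∉ f)
    (h : Sym2.map ι e = Sym2.map ι f) : e = f := by
  have := congrArg (Sym2.map (fun (x : ↥((⊤ : G.Subgraph).deleteVerts {v}).verts) => (x : V))) h
  rw [Sym2.map_map, Sym2.map_map] at this
  simp only [Function.comp_def] at this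
  rwa [map_iota_id G v ι hι he, map_iota_id G v ι hι hf] at this

lemma map_iota_edge {e : Sym2 V} (he : e ∈ G.edgeSet) (hv : v ∉ e) :
    Sym2.map ι e ∈ (((⊤ : G.Subgraph).deleteVerts {v}).coe).edgeSet := by
  induction e using Sym2.ind with
  | _ a b =>
    simp only [Sym2.mem_iff, not_or] at hv
    rw [Sym2.map_pair_eq, SimpleGraph.mem_edgeSet]
    have ha := hι a (fun h => hv.1 h.symm)
    have hb := hι b (fun h => hv.2 h.symm)
    simp only [SimpleGraph.Subgraph.coe_adj, SimpleGraph.Subgraph.deleteVerts_adj]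
    refine ⟨by simp, ?_, by simp, ?_, ?_⟩
    · simp only [ha, Set.mem_singleton_iff]; exact fun h => hv.1 h.symm
    · simp only [hb, Set.mem_singleton_iff]; exact fun h => hv.2 h.symm
    · simp only [SimpleGraph.Subgraph.top_adj, ha, hb]; exact he

lemma map_iota_sees {e f : Sym2 V} (hve : v ∉ e) (hvf : v ∉ f)
    (h : G.Sees e f) :
    (((⊤ : G.Subgraph).deleteVerts {v}).coe).Sees (Sym2.map ι e) (Sym2.map ι f) := by
  obtain ⟨a, ha, b, hb, hab⟩ := h
  have hav : a ≠ v := fun h => hve (h ▸ ha)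
  have hbv : b ≠ v := fun h => hvf (h ▸ hb)
  refine ⟨ι a, Sym2.mem_map.mpr ⟨a, ha, rfl⟩, ι b, Sym2.mem_map.mpr ⟨b, hb, rfl⟩, ?_⟩
  rcases hab with h | h
  · exact Or.inl (by subst h; rfl)
  · refine Or.inr ?_
    simp only [SimpleGraph.Subgraph.coe_adj, SimpleGraph.Subgraph.deleteVerts_adj]
    refine ⟨by simp, by simp [hι a hav, hav], by simp, by simp [hι b hbv, hbv], ?_⟩
    simp only [SimpleGraph.Subgraph.top_adj, hι a hav, hι b hbv]; exact h

omit hι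

lemma other_endpoint (u : V) {f : Sym2 V} (hf : f ∈ G.edgeSet) (hu : u ∈ f) (hv : v ∉ f) :
    ∃ y ∈ (G.neighborFinset u).erase v, y ∈ f := by
  induction f using Sym2.ind with
  | _ a b =>
    simp only [Sym2.mem_iff, not_or] at hu hv
    rw [SimpleGraph.mem_edgeSet] at hf
    rcases hu with rfl | rfl
    · exact ⟨b, Finset.mem_erase.mpr ⟨fun h : b = v => hv.2 h.symm,
        (G.mem_neighborFinset u b).mpr hf⟩, by simp⟩
    · exact ⟨a, Finset.mem_erase.mpr ⟨fun h : a = v => hv.1 h.symm,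
        (G.mem_neighborFinset u a).mpr hf.symm⟩, by simp⟩

lemma fb_subset (u w2 w3 w4 : V) (hNv : G.neighborFinset v = {u, w2, w3, w4})
    {f : Sym2 V} (hf : f ∈ G.edgeSet) (hvf : v ∉ f) (hs : G.Sees s(v,u) f) :
    f ∈ ((G.neighborFinset u).erase v).biUnion (fun y => G.incidenceFinset y) ∪
      ((G.incidenceFinset w2).erase s(v,w2)) ∪ ((G.incidenceFinset w3).erase s(v,w3)) ∪
      ((G.incidenceFinset w4).erase s(v,w4)) := by
  obtain ⟨a, ha, b, hb, hab⟩ := hs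
  have hbv : b ≠ v := fun h => hvf (h ▸ hb)
  rw [Sym2.mem_iff] at ha
  have key : b = u ∨ G.Adj v b ∨ G.Adj u b := by
    rcases ha with rfl | rfl
    · rcases hab with rfl | hadj
      · exact absurd hb hvf
      · exact Or.inr (Or.inl hadj)
    · rcases hab with rfl | hadj
      · exact Or.inl rfl
      · exact Or.inr (Or.inr hadj)
  have hfb : ∀ w : V, w ∈ f → f ∈ (G.incidenceFinset w).erase s(v,w) := by
    intro w hw
    refine Finset.mem_erase.mpr ⟨?_, (G.mem_incidenceFinset w f).mpr ⟨hf, hw⟩⟩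
    intro h; exact hvf (h ▸ (by simp : v ∈ s(v,w)))
  have hbiu : u ∈ f →
      f ∈ ((G.neighborFinset u).erase v).biUnion (fun y => G.incidenceFinset y) := by
    intro hu
    obtain ⟨y, hy, hyf⟩ := other_endpoint G v u hf hu hvf
    exact Finset.mem_biUnion.mpr ⟨y, hy, (G.mem_incidenceFinset y f).mpr ⟨hf, hyf⟩⟩
  simp only [Finset.mem_union]
  rcases key with rfl | hvb | hub
  · exact Or.inl (Or.inl (Or.inl (hbiu hb)))
  · have : b ∈ G.neighborFinset v := by rwa [SimpleGraph.mem_neighborFinset]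
    rw [hNv] at this
    simp only [Finset.mem_insert, Finset.mem_singleton] at this
    rcases this with rfl | rfl | rfl | rfl
    · exact Or.inl (Or.inl (Or.inl (hbiu hb)))
    · exact Or.inl (Or.inl (Or.inr (hfb b hb)))
    · exact Or.inl (Or.inr (hfb b hb))
    · exact Or.inr (hfb b hb)
  · have : b ∈ (G.neighborFinset u).erase v := by
      rw [Finset.mem_erase, SimpleGraph.mem_neighborFinset]; exact ⟨hbv, hub⟩
    exact Or.inl (Or.inl (Or.inl (Finset.mem_biUnion.mpr
      ⟨b, this, (G.mem_incidenceFinset b f).mpr ⟨hf, hb⟩⟩)))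

end Aux

theorem statement10 {V : Type*} [Fintype V] [DecidableEq V]
    (G : SimpleGraph V) [DecidableRel G.Adj]
    (hore : ∀ u v : V, G.Adj u v → G.degree u + G.degree v ≤ 7)
    (v : V) (hdeg : G.degree v = 4)
    (hnbrs : 3 ≤ ((G.neighborFinset v).filter (fun u => G.degree u = 2)).card)
    (h : (((⊤ : G.Subgraph).deleteVerts {v}).coe).HasStrongColoring 13) :
    G.HasStrongColoring 13 := by
  classical
  obtain ⟨c', hc'⟩ := h
  -- set up the four neighbors
  have hN4 : (G.neighborFinset v).card = 4 := hdeg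
  obtain ⟨t, hts, htc⟩ := Finset.exists_subset_card_eq hnbrs
  obtain ⟨u1, u2, u3, h12, h13, h23, rfl⟩ := Finset.card_eq_three.mp htc
  have htN : ({u1, u2, u3} : Finset V) ⊆ G.neighborFinset v :=
    hts.trans (Finset.filter_subset _ _)
  have hdeg2 : ∀ x ∈ ({u1, u2, u3} : Finset V), G.degree x = 2 := by
    intro x hx
    exact (Finset.mem_filter.mp (hts hx)).2
  have hsd : ((G.neighborFinset v) \ {u1, u2, u3}).card = 1 := by
    rw [Finset.card_sdiff_of_subset htN, hN4, htc]
  obtain ⟨u4, hu4⟩ := Finset.card_eq_one.mp hsd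
  have hu4mem : u4 ∈ G.neighborFinset v \ {u1, u2, u3} := by rw [hu4]; simp
  have hu4N : u4 ∈ G.neighborFinset v := (Finset.mem_sdiff.mp hu4mem).1
  have hu4t : u4 ∉ ({u1, u2, u3} : Finset V) := (Finset.mem_sdiff.mp hu4mem).2
  have h14 : u1 ≠ u4 := fun h => hu4t (by simp [h])
  have h24 : u2 ≠ u4 := fun h => hu4t (by simp [h])
  have h34 : u3 ≠ u4 := fun h => hu4t (by simp [h])
  have hNv : G.neighborFinset v = {u1, u2, u3, u4} := by
    have := Finset.union_sdiff_of_subset htN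
    rw [hu4] at this
    rw [← this]
    ext x
    simp only [Finset.mem_union, Finset.mem_insert, Finset.mem_singleton]
    tauto
  have hadj : ∀ x ∈ ({u1, u2, u3, u4} : Finset V), G.Adj v x := by
    intro x hx
    rw [← hNv] at hx
    exact (G.mem_neighborFinset v x).mp hx
  have hadj1 : G.Adj v u1 := hadj u1 (by simp)
  have hadj2 : G.Adj v u2 := hadj u2 (by simp)
  have hadj3 : G.Adj v u3 := hadj u3 (by simp)
  have hadj4 : G.Adj v u4 := hadj u4 (by simp)
  have hne1 : u1 ≠ v := hadj1.ne'
  have hne2 : u2 ≠ v := hadj2.ne'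
  have hne3 : u3 ≠ v := hadj3.ne'
  have hne4 : u4 ≠ v := hadj4.ne'
  have hd1 : G.degree u1 = 2 := hdeg2 u1 (by simp)
  have hd2 : G.degree u2 = 2 := hdeg2 u2 (by simp)
  have hd3 : G.degree u3 = 2 := hdeg2 u3 (by simp)
  have hd4 : G.degree u4 ≤ 3 := by have := hore v u4 hadj4; omega
  have hd4' : 1 ≤ G.degree u4 := by
    have hvm : v ∈ G.neighborFinset u4 := (G.mem_neighborFinset u4 v).mpr hadj4.symm
    have := Finset.card_pos.mpr ⟨v, hvm⟩
    rw [SimpleGraph.card_neighborFinset_eq_degree] at this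
    omega
  -- the embedding ι
  have hu1mem : u1 ∈ ((⊤ : G.Subgraph).deleteVerts {v}).verts := by simp [hne1]
  set ι : V → ↥((⊤ : G.Subgraph).deleteVerts {v}).verts :=
    fun x => if h : x = v then ⟨u1, hu1mem⟩ else ⟨x, by simp [h]⟩ with hιdef
  have hι : ∀ x, x ≠ v → ((ι x : V)) = x := by
    intro x hx; simp [hιdef, hx]
  -- forbidden color sets
  set Fb : V → Finset (Sym2 V) :=
    fun u => G.edgeFinset.filter (fun f => v ∉ f ∧ G.Sees s(v,u) f) with hFbdef
  set Cb : V → Finset (Fin 13) :=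
    fun u => (Fb u).image (fun f => c' (Sym2.map ι f)) with hCbdef
  -- the counting bound
  have bound : ∀ u w2 w3 w4 : V, G.neighborFinset v = {u, w2, w3, w4} →
      G.Adj v w2 → G.Adj v w3 → G.Adj v w4 →
      (Fb u).card ≤ (G.degree u - 1) * (7 - G.degree u) +
        (G.degree w2 - 1) + (G.degree w3 - 1) + (G.degree w4 - 1) := by
    intro u w2 w3 w4 hN ha2 ha3 ha4
    have hau : G.Adj v u := by
      have : u ∈ G.neighborFinset v := by rw [hN]; simp
      exact (G.mem_neighborFinset v u).mp this
    have hsub : Fb u ⊆ ((G.neighborFinset u).erase v).biUnion (fun y => G.incidenceFinset y) ∪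
        ((G.incidenceFinset w2).erase s(v,w2)) ∪ ((G.incidenceFinset w3).erase s(v,w3)) ∪
        ((G.incidenceFinset w4).erase s(v,w4)) := by
      intro f hf
      rw [hFbdef, Finset.mem_filter, SimpleGraph.mem_edgeFinset] at hf
      exact fb_subset G v u w2 w3 w4 hN hf.1 hf.2.1 hf.2.2
    have hbi : (((G.neighborFinset u).erase v).biUnion
        (fun y => G.incidenceFinset y)).card ≤ (G.degree u - 1) * (7 - G.degree u) := by
      calc (((G.neighborFinset u).erase v).biUnion (fun y => G.incidenceFinset y)).card
          ≤ ∑ y ∈ (G.neighborFinset u).erase v, (G.incidenceFinset y).card :=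
            Finset.card_biUnion_le
        _ ≤ ∑ _y ∈ (G.neighborFinset u).erase v, (7 - G.degree u) := by
            apply Finset.sum_le_sum
            intro y hy
            have hyN : y ∈ G.neighborFinset u := Finset.mem_of_mem_erase hy
            have : G.Adj u y := (G.mem_neighborFinset u y).mp hyN
            have := hore u y this
            rw [SimpleGraph.card_incidenceFinset_eq_degree]
            omega
        _ = ((G.neighborFinset u).erase v).card * (7 - G.degree u) := by
            rw [Finset.sum_const, smul_eq_mul]
        _ = (G.degree u - 1) * (7 - G.degree u) := by
            rw [Finset.card_erase_of_mem ((G.mem_neighborFinset u v).mpr hau.symm),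
              SimpleGraph.card_neighborFinset_eq_degree]
    have hw : ∀ w : V, G.Adj v w → ((G.incidenceFinset w).erase s(v,w)).card
        = G.degree w - 1 := by
      intro w haw
      rw [Finset.card_erase_of_mem ((G.mem_incidenceFinset w _).mpr
        ⟨haw, by simp⟩), SimpleGraph.card_incidenceFinset_eq_degree]
    calc (Fb u).card ≤ _ := Finset.card_le_card hsub
      _ ≤ _ := by
          refine (Finset.card_union_le _ _).trans ?_
          refine Nat.add_le_add ?_ (le_of_eq (hw w4 ha4))
          refine (Finset.card_union_le _ _).trans ?_
          refine Nat.add_le_add ?_ (le_of_eq (hw w3 ha3))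
          refine (Finset.card_union_le _ _).trans ?_
          exact Nat.add_le_add hbi (le_of_eq (hw w2 ha2))
  -- specialize the bound
  have perm1 : G.neighborFinset v = {u1, u2, u3, u4} := hNv
  have perm2 : G.neighborFinset v = {u2, u1, u3, u4} := by
    rw [hNv]; ext x; simp only [Finset.mem_insert, Finset.mem_singleton]; tauto
  have perm3 : G.neighborFinset v = {u3, u1, u2, u4} := by
    rw [hNv]; ext x; simp only [Finset.mem_insert, Finset.mem_singleton]; tauto
  have perm4 : G.neighborFinset v = {u4, u1, u2, u3} := by
    rw [hNv]; ext x; simp only [Finset.mem_insert, Finset.mem_singleton]; tauto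
  have bd1 : (Fb u1).card ≤ 9 := by
    have := bound u1 u2 u3 u4 perm1 hadj2 hadj3 hadj4
    rw [hd1, hd2, hd3] at this
    omega
  have bd2 : (Fb u2).card ≤ 9 := by
    have := bound u2 u1 u3 u4 perm2 hadj1 hadj3 hadj4
    rw [hd1, hd2, hd3] at this
    omega
  have bd3 : (Fb u3).card ≤ 9 := by
    have := bound u3 u1 u2 u4 perm3 hadj1 hadj2 hadj4
    rw [hd1, hd2, hd3] at this
    omega
  have bd4 : (Fb u4).card ≤ 11 := by
    have := bound u4 u1 u2 u3 perm4 hadj1 hadj2 hadj3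
    rw [hd1, hd2, hd3] at this
    have h8 : (G.degree u4 - 1) * (7 - G.degree u4) ≤ 8 := by
      set d := G.degree u4
      interval_cases d <;> norm_num
    omega
  have cb1 : (Cb u1).card ≤ 9 := (Finset.card_image_le).trans bd1
  have cb2 : (Cb u2).card ≤ 9 := (Finset.card_image_le).trans bd2
  have cb3 : (Cb u3).card ≤ 9 := (Finset.card_image_le).trans bd3
  have cb4 : (Cb u4).card ≤ 11 := (Finset.card_image_le).trans bd4
  -- choose the colors
  have pick : ∀ s : Finset (Fin 13), s.card ≤ 12 → ∃ a : Fin 13, a ∉ s := by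
    intro s hs
    have : (sᶜ).Nonempty := by
      rw [← Finset.card_pos, Finset.card_compl]
      simp only [Fintype.card_fin]
      omega
    obtain ⟨a, ha⟩ := this
    exact ⟨a, Finset.mem_compl.mp ha⟩
  obtain ⟨a4, ha4⟩ := pick (Cb u4) (by omega)
  obtain ⟨a1, ha1⟩ := pick (Cb u1 ∪ {a4})
    ((Finset.card_union_le _ _).trans (by simp; omega))
  obtain ⟨a2, ha2⟩ := pick (Cb u2 ∪ {a4, a1})
    ((Finset.card_union_le _ _).trans (by
      have : ({a4, a1} : Finset (Fin 13)).card ≤ 2 := Finset.card_le_two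
      omega))
  obtain ⟨a3, ha3⟩ := pick (Cb u3 ∪ {a4, a1, a2})
    ((Finset.card_union_le _ _).trans (by
      have : ({a4, a1, a2} : Finset (Fin 13)).card ≤ 3 :=
        Finset.card_le_three
      omega))
  simp only [Finset.mem_union, Finset.mem_insert, Finset.mem_singleton, not_or] at ha1 ha2 ha3
  -- the coloring
  set c : Sym2 V → Fin 13 := fun e =>
    if e = s(v,u1) then a1 else if e = s(v,u2) then a2 else if e = s(v,u3) then a3
    else if e = s(v,u4) then a4 else c' (Sym2.map ι e) with hcdef
  -- evaluation lemmas
  have hsne : ∀ a b : V, a ≠ v → a ≠ b → s(v,a) ≠ s(v,b) := by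
    intro a b hav hab h
    rw [Sym2.eq_iff] at h
    rcases h with ⟨-, h⟩ | ⟨h1, h2⟩
    · exact hab h
    · exact hav h2
  have hce1 : c s(v,u1) = a1 := by rw [hcdef]; simp
  have hce2 : c s(v,u2) = a2 := by
    rw [hcdef]; simp [hsne u2 u1 hne2 h12.symm]
  have hce3 : c s(v,u3) = a3 := by
    rw [hcdef]; simp [hsne u3 u1 hne3 h13.symm, hsne u3 u2 hne3 h23.symm]
  have hce4 : c s(v,u4) = a4 := by
    rw [hcdef]
    simp [hsne u4 u1 hne4 h14.symm, hsne u4 u2 hne4 h24.symm, hsne u4 u3 hne4 h34.symm]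
  have hcef : ∀ f : Sym2 V, v ∉ f → c f = c' (Sym2.map ι f) := by
    intro f hvf
    have hne : ∀ u : V, f ≠ s(v,u) := by
      intro u hh
      apply hvf
      rw [hh]
      simp
    rw [hcdef]
    simp only [if_neg (hne u1), if_neg (hne u2), if_neg (hne u3), if_neg (hne u4)]
  -- every edge containing v
  have edge_at_v : ∀ e ∈ G.edgeSet, v ∈ e →
      e = s(v,u1) ∨ e = s(v,u2) ∨ e = s(v,u3) ∨ e = s(v,u4) := by
    intro e he hv
    induction e using Sym2.ind with
    | _ a b =>
      rw [SimpleGraph.mem_edgeSet] at he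
      rw [Sym2.mem_iff] at hv
      have key : ∀ w : V, G.Adj v w →
          (w = u1 ∨ w = u2 ∨ w = u3 ∨ w = u4) := by
        intro w hw
        have : w ∈ G.neighborFinset v := (G.mem_neighborFinset v w).mpr hw
        rw [hNv] at this
        simpa using this
      rcases hv with rfl | rfl
      · rcases key b he with rfl | rfl | rfl | rfl <;> simp
      · rcases key a he.symm with rfl | rfl | rfl | rfl <;>
          simp [Sym2.eq_swap]
  -- edges seen from s(v,u) give forbidden colors
  have forb : ∀ u : V, ∀ f ∈ G.edgeSet, v ∉ f → G.Sees s(v,u) f →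
      c' (Sym2.map ι f) ∈ Cb u := by
    intro u f hf hvf hs
    rw [hCbdef]
    exact Finset.mem_image.mpr ⟨f, by
      rw [hFbdef, Finset.mem_filter, SimpleGraph.mem_edgeFinset]
      exact ⟨hf, hvf, hs⟩, rfl⟩
  -- the key asymmetric case
  have key : ∀ e ∈ G.edgeSet, ∀ f ∈ G.edgeSet, G.Sees e f → v ∈ e → v ∉ f →
      c e ≠ c f := by
    intro e he f hf hs hve hvf
    rw [hcef f hvf]
    rcases edge_at_v e he hve with rfl | rfl | rfl | rfl
    · rw [hce1]; exact fun hh => ha1.1 (hh ▸ forb u1 f hf hvf hs)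
    · rw [hce2]; exact fun hh => ha2.1 (hh ▸ forb u2 f hf hvf hs)
    · rw [hce3]; exact fun hh => ha3.1 (hh ▸ forb u3 f hf hvf hs)
    · rw [hce4]; exact fun hh => ha4 (hh ▸ forb u4 f hf hvf hs)
  refine ⟨c, ?_⟩
  intro e he f hf hef hs
  by_cases hve : v ∈ e <;> by_cases hvf : v ∈ f
  · -- both contain v
    rcases edge_at_v e he hve with rfl | rfl | rfl | rfl <;>
      rcases edge_at_v f hf hvf with rfl | rfl | rfl | rfl <;>
      simp only [hce1, hce2, hce3, hce4] <;>
      first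
        | exact absurd rfl hef
        | (intro hh; first
            | exact ha1.2 hh.symm
            | exact ha1.2 hh
            | exact ha2.2.1 hh.symm
            | exact ha2.2.1 hh
            | exact ha2.2.2 hh.symm
            | exact ha2.2.2 hh
            | exact ha3.2.1 hh.symm
            | exact ha3.2.1 hh
            | exact ha3.2.2.1 hh.symm
            | exact ha3.2.2.1 hh
            | exact ha3.2.2.2 hh.symm
            | exact ha3.2.2.2 hh)
  · exact key e he f hf hs hve hvf
  · exact fun hh => key f hf e he (sees_symm hs) hvf hve hh.symm
  · -- neither contains v
    rw [hcef e hve, hcef f hvf]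
    exact hc' (Sym2.map ι e) (map_iota_edge G v ι hι he hve)
      (Sym2.map ι f) (map_iota_edge G v ι hι hf hvf)
      (fun hh => hef (map_iota_inj G v ι hι hve hvf hh))
      (map_iota_sees G v ι hι hve hvf hs)
end

section
/- Let G be a finite simple graph with Ore-degree θ(G) ≤ 7, and let v be a vertex of degree 1 with neighbor u. Then there are at most 12 edges e of G with e ≠ uv such that e sees uv, i.e., such that e and uv are contained in a common path or cycle of length at most three (equivalently, e shares an endpoint with uv or some endpoint of e is adjacent to u or to v). -/
theorem statement11 {V : Type*} [Fintype V] [DecidableEq V]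
    (G : SimpleGraph V) [DecidableRel G.Adj]
    (hore : ∀ u v : V, G.Adj u v → G.degree u + G.degree v ≤ 7)
    (v u : V) (hdeg : G.degree v = 1) (hadj : G.Adj v u) :
    {e | e ∈ G.edgeSet ∧ e ≠ s(u, v) ∧ G.Sees e s(u, v)}.ncard ≤ 12 := by
  classical
  have huniq : ∀ w, G.Adj v w → w = u := by
    intro w hw
    have hcard : (G.neighborFinset v).card ≤ 1 := by
      rw [G.card_neighborFinset_eq_degree, hdeg]
    exact Finset.card_le_one.mp hcard w (by simpa using hw) u (by simpa using hadj)
  have hv_edge : ∀ e ∈ G.edgeSet, v ∈ e → e = s(u, v) := by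
    intro e he hve
    induction e with
    | _ x y =>
      have hxy : G.Adj x y := he
      rcases Sym2.mem_iff.mp hve with rfl | rfl
      · have := huniq y hxy
        subst this
        exact Sym2.eq_swap
      · have := huniq x hxy.symm
        subst this
        rfl
  set d := G.degree u with hd
  have hd6 : d ≤ 6 := by
    have := hore v u hadj
    omega
  set A : Finset (Sym2 V) := G.incidenceFinset u \ {s(u, v)} with hA
  set B : V → Finset (Sym2 V) := fun w => G.incidenceFinset w \ {s(u, w)} with hB
  set N : Finset V := G.neighborFinset u \ {v} with hN
  set T : Finset (Sym2 V) := A ∪ N.biUnion B with hT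
  have hsub : {e | e ∈ G.edgeSet ∧ e ≠ s(u, v) ∧ G.Sees e s(u, v)} ⊆ ↑T := by
    rintro e ⟨he, hne, a, ha, b, hb, hab⟩
    have hbu : b = u ∨ b = v := Sym2.mem_iff.mp hb
    have hAmem : u ∈ e → e ∈ T := by
      intro hu
      apply Finset.mem_union_left
      rw [hA, Finset.mem_sdiff, SimpleGraph.mem_incidenceFinset]
      exact ⟨⟨he, hu⟩, by simpa using hne⟩
    simp only [Finset.mem_coe]
    rcases hab with rfl | hadj'
    · rcases hbu with hb1 | hb1
      · exact hAmem (hb1 ▸ ha)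
      · exact absurd (hv_edge e he (hb1 ▸ ha)) hne
    · rcases hbu with hb1 | hb1
      · rw [hb1] at hadj'
        by_cases hav : a = v
        · rw [hav] at ha
          exact absurd (hv_edge e he ha) hne
        · by_cases heq : e = s(u, a)
          · exact hAmem (heq ▸ (Sym2.mem_iff.mpr (Or.inl rfl)))
          · apply Finset.mem_union_right
            apply Finset.mem_biUnion.mpr
            refine ⟨a, ?_, ?_⟩
            · rw [hN, Finset.mem_sdiff, SimpleGraph.mem_neighborFinset]
              exact ⟨hadj'.symm, by simpa using hav⟩
            · rw [hB]
              simp only [Finset.mem_sdiff, SimpleGraph.mem_incidenceFinset]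
              exact ⟨⟨he, ha⟩, by simpa using heq⟩
      · rw [hb1] at hadj'
        have hau := huniq a hadj'.symm
        exact hAmem (hau ▸ ha)
  have hstep : {e | e ∈ G.edgeSet ∧ e ≠ s(u, v) ∧ G.Sees e s(u, v)}.ncard ≤ T.card := by
    have := Set.ncard_le_ncard hsub T.finite_toSet
    rwa [Set.ncard_coe_finset] at this
  have hAcard : A.card ≤ d - 1 := by
    have hmem : s(u, v) ∈ G.incidenceFinset u := by
      rw [SimpleGraph.mem_incidenceFinset]
      exact ⟨hadj.symm, Sym2.mem_iff.mpr (Or.inl rfl)⟩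
    have : A.card = (G.incidenceFinset u).card - 1 := by
      rw [hA, Finset.card_sdiff_of_subset (Finset.singleton_subset_iff.mpr hmem), Finset.card_singleton]
    rw [this, SimpleGraph.card_incidenceFinset_eq_degree]
  have hBcard : ∀ w ∈ N, (B w).card ≤ 6 - d := by
    intro w hw
    rw [hN, Finset.mem_sdiff, SimpleGraph.mem_neighborFinset] at hw
    have hdw : G.degree w ≤ 7 - d := by
      have := hore u w hw.1
      omega
    have hmem : s(u, w) ∈ G.incidenceFinset w := by
      rw [SimpleGraph.mem_incidenceFinset]
      exact ⟨hw.1, Sym2.mem_iff.mpr (Or.inr rfl)⟩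
    have hB1 : (B w).card = (G.incidenceFinset w).card - 1 := by
      rw [hB, Finset.card_sdiff_of_subset (Finset.singleton_subset_iff.mpr hmem), Finset.card_singleton]
    rw [hB1, SimpleGraph.card_incidenceFinset_eq_degree]
    omega
  have hNcard : N.card ≤ d - 1 := by
    have hmem : v ∈ G.neighborFinset u := by
      rw [SimpleGraph.mem_neighborFinset]; exact hadj.symm
    have : N.card = (G.neighborFinset u).card - 1 := by
      rw [hN, Finset.card_sdiff_of_subset (Finset.singleton_subset_iff.mpr hmem), Finset.card_singleton]
    rw [this, SimpleGraph.card_neighborFinset_eq_degree]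
  have hTcard : T.card ≤ (d - 1) + (d - 1) * (6 - d) := by
    calc T.card ≤ A.card + (N.biUnion B).card := Finset.card_union_le _ _
    _ ≤ A.card + ∑ w ∈ N, (B w).card := by
        exact Nat.add_le_add_left (Finset.card_biUnion_le) _
    _ ≤ (d - 1) + N.card * (6 - d) := by
        refine Nat.add_le_add hAcard ?_
        simpa using Finset.sum_le_card_nsmul N _ (6 - d) hBcard
    _ ≤ (d - 1) + (d - 1) * (6 - d) := by
        exact Nat.add_le_add_left (Nat.mul_le_mul_right _ hNcard) _
  have harith : ∀ m : ℕ, m ≤ 6 → (m - 1) + (m - 1) * (6 - m) ≤ 12 := by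
    intro m hm
    interval_cases m <;> norm_num
  exact le_trans hstep (le_trans hTcard (harith d hd6))
end

section
/- Let H be the simple graph on vertex set {v₁,…,v₈} with the 13 edges v₁v₃, v₁v₄, v₁v₅, v₁v₆, v₂v₃, v₂v₄, v₂v₅, v₂v₆, v₇v₃, v₇v₄, v₈v₅, v₈v₆, v₇v₈. Then the Ore-degree of H is θ(H) = 7 and the strong chromatic index of H is χ′ₛ(H) = 13; in particular, every strong edge-coloring of H assigns pairwise distinct colors to all 13 edges. -/
/-- The list of (ordered representatives of the) 13 edges of the graph from Figure 1,
with vertex `vᵢ` encoded as `i - 1 : Fin 8`. -/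
def edgeListH : List (Fin 8 × Fin 8) :=
  [(0, 2), (0, 3), (0, 4), (0, 5), (1, 2), (1, 3), (1, 4), (1, 5),
   (6, 2), (6, 3), (7, 4), (7, 5), (6, 7)]

/-- The graph on `{v₁, …, v₈}` with the 13 edges
`v₁v₃, v₁v₄, v₁v₅, v₁v₆, v₂v₃, v₂v₄, v₂v₅, v₂v₆, v₇v₃, v₇v₄, v₈v₅, v₈v₆, v₇v₈`. -/
def HGraph : SimpleGraph (Fin 8) where
  Adj x y := (x, y) ∈ edgeListH ∨ (y, x) ∈ edgeListH
  symm := ⟨fun _ _ h => h.symm⟩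
  loopless := ⟨by
    show ∀ x : Fin 8, ¬((x, x) ∈ edgeListH ∨ (x, x) ∈ edgeListH)
    decide⟩

instance : DecidableRel HGraph.Adj :=
  fun x y => decidable_of_iff ((x, y) ∈ edgeListH ∨ (y, x) ∈ edgeListH) Iff.rfl

/-!
Any two edges of `H` lie on a common path or cycle of length at most three, so a strong
edge-coloring of `H` is injective on its 13 edges, while coloring every edge differently is
trivially strong. The degrees are 4 at `v₁, v₂` and 3 elsewhere, and no two degree-4 vertices
are adjacent, whence `θ(H) = 7`.
-/

open Finset

namespace SimpleGraph

variable {V α : Type*} {G : SimpleGraph V}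

instance decidableSees [Fintype V] [DecidableEq V] [DecidableRel G.Adj] (e f : Sym2 V) :
    Decidable (G.Sees e f) := by
  unfold Sees; infer_instance

theorem isStrongEdgeColoring_of_injOn {c : Sym2 V → α} (hc : G.edgeSet.InjOn c) :
    G.IsStrongEdgeColoring c :=
  fun _ he _ hf hne _ hcef => hne (hc he hf hcef)

theorem IsStrongEdgeColoring.injOn_edgeSet (hG : G.edgeSet.Pairwise G.Sees)
    {c : Sym2 V → α} (hc : G.IsStrongEdgeColoring c) : G.edgeSet.InjOn c := by
  intro e he f hf hcef
  by_contra hne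
  exact hc e he f hf hne (hG he hf hne) hcef

theorem hasStrongColoring_of_card_edgeFinset_le [Fintype G.edgeSet] {n : ℕ} [NeZero n]
    (hn : #G.edgeFinset ≤ n) : G.HasStrongColoring n := by
  classical
  refine ⟨fun e => if h : e ∈ G.edgeFinset then
    Fin.castLE hn (G.edgeFinset.equivFin ⟨e, h⟩) else 0, isStrongEdgeColoring_of_injOn ?_⟩
  intro e he f hf hcef
  rw [← mem_edgeFinset] at he hf
  simpa [he, hf, Fin.castLE_inj] using hcef

theorem not_hasStrongColoring_of_lt_card_edgeFinset [Fintype G.edgeSet]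
    (hG : G.edgeSet.Pairwise G.Sees) {n : ℕ} (hn : n < #G.edgeFinset) :
    ¬ G.HasStrongColoring n := by
  rintro ⟨c, hc⟩
  have hinj : Set.InjOn c G.edgeFinset := by
    rw [coe_edgeFinset]; exact hc.injOn_edgeSet hG
  have := card_le_card_of_injOn c (fun x _ => mem_univ (c x)) hinj
  simp only [card_univ, Fintype.card_fin] at this
  omega

end SimpleGraph

theorem HGraph_edgeSet_pairwise_sees : HGraph.edgeSet.Pairwise HGraph.Sees := by
  unfold Set.Pairwise; decide

theorem HGraph_card_edgeFinset : #HGraph.edgeFinset = 13 := by decide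

theorem statement13 :
    (∀ u v : Fin 8, HGraph.Adj u v → HGraph.degree u + HGraph.degree v ≤ 7) ∧
    (∃ u v : Fin 8, HGraph.Adj u v ∧ HGraph.degree u + HGraph.degree v = 7) ∧
    HGraph.HasStrongColoring 13 ∧
    ¬ HGraph.HasStrongColoring 12 ∧
    (∀ {α : Type} (c : Sym2 (Fin 8) → α), HGraph.IsStrongEdgeColoring c →
      ∀ e ∈ HGraph.edgeSet, ∀ f ∈ HGraph.edgeSet, e ≠ f → c e ≠ c f) := by
  refine ⟨by decide, ⟨0, 2, by decide, by decide⟩,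
    SimpleGraph.hasStrongColoring_of_card_edgeFinset_le HGraph_card_edgeFinset.le,
    SimpleGraph.not_hasStrongColoring_of_lt_card_edgeFinset HGraph_edgeSet_pairwise_sees
      (by rw [HGraph_card_edgeFinset]; norm_num), ?_⟩
  intro α c hc e he f hf hne hcef
  exact hne (hc.injOn_edgeSet HGraph_edgeSet_pairwise_sees he hf hcef)
end
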